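/- arXiv:solv-int/9712012 — 4 statements merged into one kernel-verified Lean document; each statement's English description precedes it below -/
import Mathlib

section
/- Let G = F/Φ₁. Then ∂_{t̄₂} G = ∂_{t̄₁}² G − 2(∂_{t̄₁}(Φ₂/Φ₁))·G. In other words, the second ghost-symmetry flow acts on the ratio F/Φ₁ as the ordinary second-order differential operator M̄₂ = ∂̄² − 2∂̄(Φ₂/Φ₁) in the first ghost time (this is the s = 2 case of the paper's Lemma 1 combined with Proposition 1, stating M̄₂ = (L̄²)₊ = ∂̄² − 2∂̄(Φ₂/Φ₁)). -/
/-- Partial derivative with respect to the first variable `x`. -/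
noncomputable def d1 (f : ℝ → ℝ → ℝ → ℝ) : ℝ → ℝ → ℝ → ℝ :=
  fun x t₁ t₂ => deriv (fun y => f y t₁ t₂) x

/-- Partial derivative with respect to the second variable `t̄₁`. -/
noncomputable def d2 (f : ℝ → ℝ → ℝ → ℝ) : ℝ → ℝ → ℝ → ℝ :=
  fun x t₁ t₂ => deriv (fun s => f x s t₂) t₁

/-- Partial derivative with respect to the third variable `t̄₂`. -/
noncomputable def d3 (f : ℝ → ℝ → ℝ → ℝ) : ℝ → ℝ → ℝ → ℝ :=
  fun x t₁ t₂ => deriv (fun s => f x t₁ s) t₂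

/-- Smoothness of a function of three real variables. -/
def Smooth3 (f : ℝ → ℝ → ℝ → ℝ) : Prop :=
  ContDiff ℝ (⊤ : ℕ∞) (fun p : ℝ × ℝ × ℝ => f p.1 p.2.1 p.2.2)

lemma Smooth3.diff2 {f : ℝ → ℝ → ℝ → ℝ} (hf : Smooth3 f) (x t₁ t₂ : ℝ) :
    DifferentiableAt ℝ (fun s => f x s t₂) t₁ := by
  have h : ContDiff ℝ (⊤ : ℕ∞) (fun s : ℝ => f x s t₂) :=
    hf.comp ((contDiff_const (c := x)).prodMk (contDiff_id.prodMk (contDiff_const (c := t₂))))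
  exact (h.differentiable (by simp)) t₁

lemma Smooth3.diff3 {f : ℝ → ℝ → ℝ → ℝ} (hf : Smooth3 f) (x t₁ t₂ : ℝ) :
    DifferentiableAt ℝ (fun s => f x t₁ s) t₂ := by
  have h : ContDiff ℝ (⊤ : ℕ∞) (fun s : ℝ => f x t₁ s) :=
    hf.comp ((contDiff_const (c := x)).prodMk ((contDiff_const (c := t₁)).prodMk contDiff_id))
  exact (h.differentiable (by simp)) t₂

/-- with `G = F/Φ₁`, the second ghost-symmetry flow acts on `G` as the
ordinary second-order differential operator `M̄₂ = ∂̄₁² − 2∂̄₁(Φ₂/Φ₁)` in the first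
ghost time: `∂̄₂ G = ∂̄₁² G − 2(∂̄₁(Φ₂/Φ₁))·G`. -/
theorem ghost_M2_on_F_over_Phi1
    (Φ₁ Φ₂ Φ₃ Ψ₁ Ψ₂ F s₁₁ s₁₂ s₂₁ S₁ S₂ : ℝ → ℝ → ℝ → ℝ)
    (hΦ₁ : Smooth3 Φ₁) (hΦ₂ : Smooth3 Φ₂) (hΦ₃ : Smooth3 Φ₃)
    (hΨ₁ : Smooth3 Ψ₁) (hΨ₂ : Smooth3 Ψ₂) (hF : Smooth3 F)
    (hs₁₁ : Smooth3 s₁₁) (hs₁₂ : Smooth3 s₁₂) (hs₂₁ : Smooth3 s₂₁)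
    (hS₁ : Smooth3 S₁) (hS₂ : Smooth3 S₂)
    -- squared-eigenfunction potentials
    (hpot₁₁ : ∀ x t₁ t₂, d1 s₁₁ x t₁ t₂ = Ψ₁ x t₁ t₂ * Φ₁ x t₁ t₂)
    (hpot₁₂ : ∀ x t₁ t₂, d1 s₁₂ x t₁ t₂ = Ψ₁ x t₁ t₂ * Φ₂ x t₁ t₂)
    (hpot₂₁ : ∀ x t₁ t₂, d1 s₂₁ x t₁ t₂ = Ψ₂ x t₁ t₂ * Φ₁ x t₁ t₂)
    (hpotS₁ : ∀ x t₁ t₂, d1 S₁ x t₁ t₂ = Ψ₁ x t₁ t₂ * F x t₁ t₂)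
    (hpotS₂ : ∀ x t₁ t₂, d1 S₂ x t₁ t₂ = Ψ₂ x t₁ t₂ * F x t₁ t₂)
    -- ghost-symmetry flow equations
    (hflow₁Φ₁ : ∀ x t₁ t₂, d2 Φ₁ x t₁ t₂ = Φ₁ x t₁ t₂ * s₁₁ x t₁ t₂ - Φ₂ x t₁ t₂)
    (hflow₁Φ₂ : ∀ x t₁ t₂, d2 Φ₂ x t₁ t₂ = Φ₁ x t₁ t₂ * s₁₂ x t₁ t₂ - Φ₃ x t₁ t₂)
    (hflow₂Φ₁ : ∀ x t₁ t₂, d3 Φ₁ x t₁ t₂ =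
      Φ₂ x t₁ t₂ * s₁₁ x t₁ t₂ + Φ₁ x t₁ t₂ * s₂₁ x t₁ t₂ - Φ₃ x t₁ t₂)
    (hflow₁F : ∀ x t₁ t₂, d2 F x t₁ t₂ = Φ₁ x t₁ t₂ * S₁ x t₁ t₂)
    (hflow₂F : ∀ x t₁ t₂, d3 F x t₁ t₂ =
      Φ₂ x t₁ t₂ * S₁ x t₁ t₂ + Φ₁ x t₁ t₂ * S₂ x t₁ t₂)
    -- induced flows of the potentials
    (hflow₁S₁ : ∀ x t₁ t₂, d2 S₁ x t₁ t₂ = s₁₁ x t₁ t₂ * S₁ x t₁ t₂ + S₂ x t₁ t₂)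
    (hflow₁s₁₁ : ∀ x t₁ t₂, d2 s₁₁ x t₁ t₂ =
      (s₁₁ x t₁ t₂) ^ 2 + s₂₁ x t₁ t₂ - s₁₂ x t₁ t₂)
    (hΦ₁ne : ∀ x t₁ t₂, Φ₁ x t₁ t₂ ≠ 0) :
    ∀ x t₁ t₂,
      d3 (fun x t₁ t₂ => F x t₁ t₂ / Φ₁ x t₁ t₂) x t₁ t₂ =
        d2 (d2 (fun x t₁ t₂ => F x t₁ t₂ / Φ₁ x t₁ t₂)) x t₁ t₂
          - 2 * d2 (fun x t₁ t₂ => Φ₂ x t₁ t₂ / Φ₁ x t₁ t₂) x t₁ t₂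
              * (F x t₁ t₂ / Φ₁ x t₁ t₂) := by
  -- formula for the first ghost-time derivative of G = F/Φ₁
  have hG2 : ∀ x t₁ t₂, d2 (fun x t₁ t₂ => F x t₁ t₂ / Φ₁ x t₁ t₂) x t₁ t₂ =
      S₁ x t₁ t₂ - F x t₁ t₂ / Φ₁ x t₁ t₂ * s₁₁ x t₁ t₂
        + F x t₁ t₂ / Φ₁ x t₁ t₂ * (Φ₂ x t₁ t₂ / Φ₁ x t₁ t₂) := by
    intro x t₁ t₂
    have h : d2 (fun x t₁ t₂ => F x t₁ t₂ / Φ₁ x t₁ t₂) x t₁ t₂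
        = (deriv (fun s => F x s t₂) t₁ * Φ₁ x t₁ t₂
            - F x t₁ t₂ * deriv (fun s => Φ₁ x s t₂) t₁) / (Φ₁ x t₁ t₂) ^ 2 :=
      deriv_div (hF.diff2 x t₁ t₂) (hΦ₁.diff2 x t₁ t₂) (hΦ₁ne x t₁ t₂)
    have h1 : deriv (fun s => F x s t₂) t₁ = Φ₁ x t₁ t₂ * S₁ x t₁ t₂ := hflow₁F x t₁ t₂
    have h2 : deriv (fun s => Φ₁ x s t₂) t₁ =
        Φ₁ x t₁ t₂ * s₁₁ x t₁ t₂ - Φ₂ x t₁ t₂ := hflow₁Φ₁ x t₁ t₂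
    rw [h, h1, h2]
    have hne := hΦ₁ne x t₁ t₂
    field_simp
    ring
  intro x t₁ t₂
  have hne := hΦ₁ne x t₁ t₂
  -- HasDerivAt facts in the t₁ direction at (x, t₁, t₂)
  have HF : HasDerivAt (fun s => F x s t₂) (Φ₁ x t₁ t₂ * S₁ x t₁ t₂) t₁ := by
    have h := (hF.diff2 x t₁ t₂).hasDerivAt
    have e : deriv (fun s => F x s t₂) t₁ = Φ₁ x t₁ t₂ * S₁ x t₁ t₂ := hflow₁F x t₁ t₂
    rwa [e] at h
  have HΦ₁' : HasDerivAt (fun s => Φ₁ x s t₂)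
      (Φ₁ x t₁ t₂ * s₁₁ x t₁ t₂ - Φ₂ x t₁ t₂) t₁ := by
    have h := (hΦ₁.diff2 x t₁ t₂).hasDerivAt
    have e : deriv (fun s => Φ₁ x s t₂) t₁ =
        Φ₁ x t₁ t₂ * s₁₁ x t₁ t₂ - Φ₂ x t₁ t₂ := hflow₁Φ₁ x t₁ t₂
    rwa [e] at h
  have HΦ₂' : HasDerivAt (fun s => Φ₂ x s t₂)
      (Φ₁ x t₁ t₂ * s₁₂ x t₁ t₂ - Φ₃ x t₁ t₂) t₁ := by
    have h := (hΦ₂.diff2 x t₁ t₂).hasDerivAt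
    have e : deriv (fun s => Φ₂ x s t₂) t₁ =
        Φ₁ x t₁ t₂ * s₁₂ x t₁ t₂ - Φ₃ x t₁ t₂ := hflow₁Φ₂ x t₁ t₂
    rwa [e] at h
  have Hs : HasDerivAt (fun s => s₁₁ x s t₂)
      ((s₁₁ x t₁ t₂) ^ 2 + s₂₁ x t₁ t₂ - s₁₂ x t₁ t₂) t₁ := by
    have h := (hs₁₁.diff2 x t₁ t₂).hasDerivAt
    have e : deriv (fun s => s₁₁ x s t₂) t₁ =
        (s₁₁ x t₁ t₂) ^ 2 + s₂₁ x t₁ t₂ - s₁₂ x t₁ t₂ := hflow₁s₁₁ x t₁ t₂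
    rwa [e] at h
  have HS : HasDerivAt (fun s => S₁ x s t₂)
      (s₁₁ x t₁ t₂ * S₁ x t₁ t₂ + S₂ x t₁ t₂) t₁ := by
    have h := (hS₁.diff2 x t₁ t₂).hasDerivAt
    have e : deriv (fun s => S₁ x s t₂) t₁ =
        s₁₁ x t₁ t₂ * S₁ x t₁ t₂ + S₂ x t₁ t₂ := hflow₁S₁ x t₁ t₂
    rwa [e] at h
  -- second t₁-derivative of G
  have Hnum := (HS.sub ((HF.div HΦ₁' hne).mul Hs)).add
      ((HF.div HΦ₁' hne).mul (HΦ₂'.div HΦ₁' hne))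
  have hdd : d2 (d2 (fun x t₁ t₂ => F x t₁ t₂ / Φ₁ x t₁ t₂)) x t₁ t₂ =
      ((s₁₁ x t₁ t₂ * S₁ x t₁ t₂ + S₂ x t₁ t₂) -
        ((Φ₁ x t₁ t₂ * S₁ x t₁ t₂ * Φ₁ x t₁ t₂ -
            F x t₁ t₂ * (Φ₁ x t₁ t₂ * s₁₁ x t₁ t₂ - Φ₂ x t₁ t₂)) / (Φ₁ x t₁ t₂) ^ 2 *
            s₁₁ x t₁ t₂ +
          F x t₁ t₂ / Φ₁ x t₁ t₂ *
            ((s₁₁ x t₁ t₂) ^ 2 + s₂₁ x t₁ t₂ - s₁₂ x t₁ t₂))) +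
        ((Φ₁ x t₁ t₂ * S₁ x t₁ t₂ * Φ₁ x t₁ t₂ -
            F x t₁ t₂ * (Φ₁ x t₁ t₂ * s₁₁ x t₁ t₂ - Φ₂ x t₁ t₂)) / (Φ₁ x t₁ t₂) ^ 2 *
            (Φ₂ x t₁ t₂ / Φ₁ x t₁ t₂) +
          F x t₁ t₂ / Φ₁ x t₁ t₂ *
            (((Φ₁ x t₁ t₂ * s₁₂ x t₁ t₂ - Φ₃ x t₁ t₂) * Φ₁ x t₁ t₂ -
                Φ₂ x t₁ t₂ * (Φ₁ x t₁ t₂ * s₁₁ x t₁ t₂ - Φ₂ x t₁ t₂)) /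
              (Φ₁ x t₁ t₂) ^ 2)) := by
    have heq : (fun s => d2 (fun x t₁ t₂ => F x t₁ t₂ / Φ₁ x t₁ t₂) x s t₂)
        = (fun s => S₁ x s t₂ - F x s t₂ / Φ₁ x s t₂ * s₁₁ x s t₂
            + F x s t₂ / Φ₁ x s t₂ * (Φ₂ x s t₂ / Φ₁ x s t₂)) :=
      funext fun s => hG2 x s t₂
    show deriv (fun s => d2 (fun x t₁ t₂ => F x t₁ t₂ / Φ₁ x t₁ t₂) x s t₂) t₁ = _
    rw [heq]
    exact Hnum.deriv
  -- t₂-derivative of G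
  have hd3 : d3 (fun x t₁ t₂ => F x t₁ t₂ / Φ₁ x t₁ t₂) x t₁ t₂ =
      ((Φ₂ x t₁ t₂ * S₁ x t₁ t₂ + Φ₁ x t₁ t₂ * S₂ x t₁ t₂) * Φ₁ x t₁ t₂ -
        F x t₁ t₂ * (Φ₂ x t₁ t₂ * s₁₁ x t₁ t₂ + Φ₁ x t₁ t₂ * s₂₁ x t₁ t₂ - Φ₃ x t₁ t₂)) /
        (Φ₁ x t₁ t₂) ^ 2 := by
    have h : d3 (fun x t₁ t₂ => F x t₁ t₂ / Φ₁ x t₁ t₂) x t₁ t₂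
        = (deriv (fun s => F x t₁ s) t₂ * Φ₁ x t₁ t₂
            - F x t₁ t₂ * deriv (fun s => Φ₁ x t₁ s) t₂) / (Φ₁ x t₁ t₂) ^ 2 :=
      deriv_div (hF.diff3 x t₁ t₂) (hΦ₁.diff3 x t₁ t₂) hne
    have h1 : deriv (fun s => F x t₁ s) t₂ =
        Φ₂ x t₁ t₂ * S₁ x t₁ t₂ + Φ₁ x t₁ t₂ * S₂ x t₁ t₂ := hflow₂F x t₁ t₂
    have h2 : deriv (fun s => Φ₁ x t₁ s) t₂ =
        Φ₂ x t₁ t₂ * s₁₁ x t₁ t₂ + Φ₁ x t₁ t₂ * s₂₁ x t₁ t₂ - Φ₃ x t₁ t₂ := hflow₂Φ₁ x t₁ t₂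
    rw [h, h1, h2]
  -- t₁-derivative of Φ₂/Φ₁
  have hr : d2 (fun x t₁ t₂ => Φ₂ x t₁ t₂ / Φ₁ x t₁ t₂) x t₁ t₂ =
      ((Φ₁ x t₁ t₂ * s₁₂ x t₁ t₂ - Φ₃ x t₁ t₂) * Φ₁ x t₁ t₂ -
        Φ₂ x t₁ t₂ * (Φ₁ x t₁ t₂ * s₁₁ x t₁ t₂ - Φ₂ x t₁ t₂)) / (Φ₁ x t₁ t₂) ^ 2 := by
    have h : d2 (fun x t₁ t₂ => Φ₂ x t₁ t₂ / Φ₁ x t₁ t₂) x t₁ t₂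
        = (deriv (fun s => Φ₂ x s t₂) t₁ * Φ₁ x t₁ t₂
            - Φ₂ x t₁ t₂ * deriv (fun s => Φ₁ x s t₂) t₁) / (Φ₁ x t₁ t₂) ^ 2 :=
      deriv_div (hΦ₂.diff2 x t₁ t₂) (hΦ₁.diff2 x t₁ t₂) hne
    have h1 : deriv (fun s => Φ₂ x s t₂) t₁ =
        Φ₁ x t₁ t₂ * s₁₂ x t₁ t₂ - Φ₃ x t₁ t₂ := hflow₁Φ₂ x t₁ t₂
    have h2 : deriv (fun s => Φ₁ x s t₂) t₁ =
        Φ₁ x t₁ t₂ * s₁₁ x t₁ t₂ - Φ₂ x t₁ t₂ := hflow₁Φ₁ x t₁ t₂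
    rw [h, h1, h2]
  rw [hd3, hdd, hr]
  field_simp
  ring
end

section
/- Define the Darboux-transformed functions Φ′_j = Φ₁·∂(Φ_{j+1}/Φ₁) for j ∈ {1, k, k+1} and Ψ′₁ = 1/Φ₁, Ψ′₂ = −s₁/Φ₁. Then the transformed data satisfy the same first ghost-symmetry flow equations with the explicit new potentials s′_k = Φ_{k+1}/Φ₁ and ŝ′₁ = Φ₂/Φ₁: namely (i) ∂(Φ_{k+1}/Φ₁) = Ψ′₁Φ′_k and ∂(Φ₂/Φ₁) = Φ′₁Ψ′₁; (ii) ∂̄Φ′_k = Φ′₁·(Φ_{k+1}/Φ₁) − Φ′_{k+1}; (iii) ∂̄Ψ′₁ = Ψ′₁·(Φ₂/Φ₁) + Ψ′₂. This is the s = 1 function-level content of the paper's Proposition 2: ghost symmetries commute with Darboux transformations. -/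
/-- Partial derivative with respect to the first variable `x`. -/
noncomputable def pdx (f : ℝ → ℝ → ℝ) : ℝ → ℝ → ℝ :=
  fun x t => deriv (fun y => f y t) x

/-- Partial derivative with respect to the second variable `t̄`. -/
noncomputable def pdt (f : ℝ → ℝ → ℝ) : ℝ → ℝ → ℝ :=
  fun x t => deriv (fun s => f x s) t

/-- Smoothness of a function of two real variables. -/
def Smooth2 (f : ℝ → ℝ → ℝ) : Prop :=
  ContDiff ℝ (⊤ : ℕ∞) (Function.uncurry f)

open Function

lemma uncurry_diff (f : ℝ → ℝ → ℝ) (hf : Smooth2 f) :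
    Differentiable ℝ (uncurry f) := hf.differentiable (by simp)

lemma hasDerivAt_x (f : ℝ → ℝ → ℝ) (hf : Smooth2 f) (x t : ℝ) :
    HasDerivAt (fun y => f y t) (fderiv ℝ (uncurry f) (x, t) (1, 0)) x := by
  have h1 : HasDerivAt (fun y : ℝ => (y, t)) ((1:ℝ), (0:ℝ)) x :=
    (hasDerivAt_id x).prodMk (hasDerivAt_const x t)
  exact ((uncurry_diff f hf (x,t)).hasFDerivAt).comp_hasDerivAt x h1

lemma hasDerivAt_t (f : ℝ → ℝ → ℝ) (hf : Smooth2 f) (x t : ℝ) :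
    HasDerivAt (fun s => f x s) (fderiv ℝ (uncurry f) (x, t) (0, 1)) t := by
  have h1 : HasDerivAt (fun s : ℝ => (x, s)) ((0:ℝ), (1:ℝ)) t :=
    (hasDerivAt_const t x).prodMk (hasDerivAt_id t)
  exact ((uncurry_diff f hf (x,t)).hasFDerivAt).comp_hasDerivAt t h1

lemma pdx_eq (f : ℝ → ℝ → ℝ) (hf : Smooth2 f) (x t : ℝ) :
    pdx f x t = fderiv ℝ (uncurry f) (x, t) (1, 0) := (hasDerivAt_x f hf x t).deriv

lemma pdt_eq (f : ℝ → ℝ → ℝ) (hf : Smooth2 f) (x t : ℝ) :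
    pdt f x t = fderiv ℝ (uncurry f) (x, t) (0, 1) := (hasDerivAt_t f hf x t).deriv

lemma smooth2_fderiv_apply (f : ℝ → ℝ → ℝ) (hf : Smooth2 f) (v : ℝ × ℝ) :
    Smooth2 (fun x t => fderiv ℝ (uncurry f) (x, t) v) := by
  have h : ContDiff ℝ (⊤ : ℕ∞) (fun p : ℝ × ℝ => fderiv ℝ (uncurry f) p v) :=
    (hf.fderiv_right (by simp)).clm_apply contDiff_const
  exact h

lemma smooth2_pdx (f : ℝ → ℝ → ℝ) (hf : Smooth2 f) : Smooth2 (pdx f) := by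
  have := smooth2_fderiv_apply f hf (1, 0)
  unfold Smooth2 at *
  convert this using 1
  ext p
  exact pdx_eq f hf p.1 p.2

lemma smooth2_pdt (f : ℝ → ℝ → ℝ) (hf : Smooth2 f) : Smooth2 (pdt f) := by
  have := smooth2_fderiv_apply f hf (0, 1)
  unfold Smooth2 at *
  convert this using 1
  ext p
  exact pdt_eq f hf p.1 p.2

lemma mixed_eq (f : ℝ → ℝ → ℝ) (hf : Smooth2 f) (v : ℝ × ℝ) (x t : ℝ) :
    fderiv ℝ (fun p : ℝ × ℝ => fderiv ℝ (uncurry f) p v) (x, t)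
      = (ContinuousLinearMap.apply ℝ ℝ v).comp
          (fderiv ℝ (fderiv ℝ (uncurry f)) (x, t)) := by
  have hd : DifferentiableAt ℝ (fderiv ℝ (uncurry f)) (x, t) :=
    (((hf.fderiv_right (by simp) : ContDiff ℝ (⊤ : ℕ∞) _).differentiable (by simp))) (x, t)
  exact fderiv_comp (x := (x, t)) (ContinuousLinearMap.apply ℝ ℝ v).differentiableAt hd
    |>.trans (by rw [(ContinuousLinearMap.apply ℝ ℝ v).fderiv])

lemma clairaut (f : ℝ → ℝ → ℝ) (hf : Smooth2 f) (x t : ℝ) :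
    pdt (pdx f) x t = pdx (pdt f) x t := by
  set F := uncurry f with hF
  have hdF : Differentiable ℝ (fderiv ℝ F) :=
    ((hf.fderiv_right (by simp) : ContDiff ℝ (⊤ : ℕ∞) _).differentiable (by simp))
  have hsymm := second_derivative_symmetric (f := F)
    (f' := fderiv ℝ F) (f'' := fderiv ℝ (fderiv ℝ F) (x, t)) (x := (x, t))
    (fun y => ((uncurry_diff f hf) y).hasFDerivAt) ((hdF (x, t)).hasFDerivAt)
  have h1 : pdt (pdx f) x t
      = fderiv ℝ (fun p : ℝ × ℝ => fderiv ℝ F p (1, 0)) (x, t) (0, 1) := by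
    rw [pdt_eq (pdx f) (smooth2_pdx f hf) x t]
    congr 1
    apply Filter.EventuallyEq.fderiv_eq
    filter_upwards with p
    exact pdx_eq f hf p.1 p.2
  have h2 : pdx (pdt f) x t
      = fderiv ℝ (fun p : ℝ × ℝ => fderiv ℝ F p (0, 1)) (x, t) (1, 0) := by
    rw [pdx_eq (pdt f) (smooth2_pdt f hf) x t]
    congr 1
    apply Filter.EventuallyEq.fderiv_eq
    filter_upwards with p
    exact pdt_eq f hf p.1 p.2
  rw [h1, h2, mixed_eq f hf _ x t, mixed_eq f hf _ x t]
  simpa using (hsymm (1, 0) (0, 1)).symm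

lemma hasDerivAt_pdx (f : ℝ → ℝ → ℝ) (hf : Smooth2 f) (x t : ℝ) :
    HasDerivAt (fun y => f y t) (pdx f x t) x := by
  rw [pdx_eq f hf x t]; exact hasDerivAt_x f hf x t

lemma hasDerivAt_pdt (f : ℝ → ℝ → ℝ) (hf : Smooth2 f) (x t : ℝ) :
    HasDerivAt (fun s => f x s) (pdt f x t) t := by
  rw [pdt_eq f hf x t]; exact hasDerivAt_t f hf x t

lemma smooth2_div (f g : ℝ → ℝ → ℝ) (hf : Smooth2 f) (hg : Smooth2 g)
    (hg0 : ∀ x t, g x t ≠ 0) : Smooth2 (fun x t => f x t / g x t) :=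
  hf.div hg fun p => hg0 p.1 p.2


/-- the Darboux-transformed data `Φ′_j = Φ₁·∂(Φ_{j+1}/Φ₁)` (for
`j ∈ {1, k, k+1}`), `Ψ′₁ = 1/Φ₁`, `Ψ′₂ = −s₁/Φ₁` satisfy the same first
ghost-symmetry flow equations with new potentials `s′_k = Φ_{k+1}/Φ₁`,
`ŝ′₁ = Φ₂/Φ₁`: (i) `∂(Φ_{k+1}/Φ₁) = Ψ′₁Φ′_k` and `∂(Φ₂/Φ₁) = Φ′₁Ψ′₁`;
(ii) `∂̄Φ′_k = Φ′₁·(Φ_{k+1}/Φ₁) − Φ′_{k+1}`; (iii) `∂̄Ψ′₁ = Ψ′₁·(Φ₂/Φ₁) + Ψ′₂`. -/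
theorem ghost_commutes_with_Darboux
    (Φ₁ Φ₂ Φk₁ Φk₂ Ψ₁ s₁ sk₁ : ℝ → ℝ → ℝ)
    -- `Φk₁` stands for `Φ_{k+1}`, `Φk₂` for `Φ_{k+2}`, `sk₁` for `s_{k+1}`
    (hΦ₁ : Smooth2 Φ₁) (hΦ₂ : Smooth2 Φ₂) (hΦk₁ : Smooth2 Φk₁) (hΦk₂ : Smooth2 Φk₂)
    (hΨ₁ : Smooth2 Ψ₁) (hs₁ : Smooth2 s₁) (hsk₁ : Smooth2 sk₁)
    -- squared-eigenfunction potentials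
    (hpot₁ : ∀ x t, pdx s₁ x t = Ψ₁ x t * Φ₁ x t)
    (hpotk₁ : ∀ x t, pdx sk₁ x t = Ψ₁ x t * Φk₁ x t)
    -- first ghost-symmetry flow equations
    (hflowΦ₁ : ∀ x t, pdt Φ₁ x t = Φ₁ x t * s₁ x t - Φ₂ x t)
    (hflowΦk₁ : ∀ x t, pdt Φk₁ x t = Φ₁ x t * sk₁ x t - Φk₂ x t)
    (hΦ₁ne : ∀ x t, Φ₁ x t ≠ 0) :
    -- Darboux-transformed functions
    (let Φ'₁ : ℝ → ℝ → ℝ := fun x t => Φ₁ x t * pdx (fun y s => Φ₂ y s / Φ₁ y s) x t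
     let Φ'k : ℝ → ℝ → ℝ := fun x t => Φ₁ x t * pdx (fun y s => Φk₁ y s / Φ₁ y s) x t
     let Φ'k₁ : ℝ → ℝ → ℝ := fun x t => Φ₁ x t * pdx (fun y s => Φk₂ y s / Φ₁ y s) x t
     let Ψ'₁ : ℝ → ℝ → ℝ := fun x t => 1 / Φ₁ x t
     let Ψ'₂ : ℝ → ℝ → ℝ := fun x t => -(s₁ x t) / Φ₁ x t
     -- (i) new squared-eigenfunction potentials are `s′_k = Φ_{k+1}/Φ₁`, `ŝ′₁ = Φ₂/Φ₁`
     (∀ x t, pdx (fun y s => Φk₁ y s / Φ₁ y s) x t = Ψ'₁ x t * Φ'k x t) ∧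
     (∀ x t, pdx (fun y s => Φ₂ y s / Φ₁ y s) x t = Φ'₁ x t * Ψ'₁ x t) ∧
     -- (ii) transformed ghost flow of the eigenfunction
     (∀ x t, pdt Φ'k x t = Φ'₁ x t * (Φk₁ x t / Φ₁ x t) - Φ'k₁ x t) ∧
     -- (iii) transformed ghost flow of the adjoint eigenfunction
     (∀ x t, pdt Ψ'₁ x t = Ψ'₁ x t * (Φ₂ x t / Φ₁ x t) + Ψ'₂ x t)) := by
  intro Φ'₁ Φ'k Φ'k₁ Ψ'₁ Ψ'₂
  set q : ℝ → ℝ → ℝ := fun y s => Φk₁ y s / Φ₁ y s with hqdef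
  set r : ℝ → ℝ → ℝ := fun y s => Φ₂ y s / Φ₁ y s with hrdef
  set w : ℝ → ℝ → ℝ := fun y s => Φk₂ y s / Φ₁ y s with hwdef
  have hq : Smooth2 q := smooth2_div _ _ hΦk₁ hΦ₁ hΦ₁ne
  have hr : Smooth2 r := smooth2_div _ _ hΦ₂ hΦ₁ hΦ₁ne
  have hw : Smooth2 w := smooth2_div _ _ hΦk₂ hΦ₁ hΦ₁ne
  refine ⟨?_, ?_, ?_, ?_⟩
  · intro x t
    have h0 := hΦ₁ne x t
    show pdx q x t = (1 / Φ₁ x t) * (Φ₁ x t * pdx q x t)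
    field_simp
  · intro x t
    have h0 := hΦ₁ne x t
    show pdx r x t = (Φ₁ x t * pdx r x t) * (1 / Φ₁ x t)
    field_simp
  · intro x t
    -- (ii)
    -- step 3: pdt q = E
    have hstep3 : ∀ y s, pdt q y s
        = sk₁ y s - w y s - q y s * s₁ y s + q y s * r y s := by
      intro y s
      have hdiv : HasDerivAt (fun u => Φk₁ y u / Φ₁ y u)
          ((pdt Φk₁ y s * Φ₁ y s - Φk₁ y s * pdt Φ₁ y s) / (Φ₁ y s)^2) s :=
        (hasDerivAt_pdt Φk₁ hΦk₁ y s).div (hasDerivAt_pdt Φ₁ hΦ₁ y s) (hΦ₁ne y s)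
      have : pdt q y s = (pdt Φk₁ y s * Φ₁ y s - Φk₁ y s * pdt Φ₁ y s) / (Φ₁ y s)^2 :=
        hdiv.deriv
      rw [this, hflowΦk₁, hflowΦ₁]
      have h0 := hΦ₁ne y s
      simp only [hqdef, hrdef, hwdef]
      field_simp
      ring
    -- step 1: product rule in t
    have hpq : Smooth2 (pdx q) := smooth2_pdx q hq
    have hprod : pdt Φ'k x t = pdt Φ₁ x t * pdx q x t + Φ₁ x t * pdt (pdx q) x t := by
      have : HasDerivAt (fun u => Φ₁ x u * pdx q x u)
          (pdt Φ₁ x t * pdx q x t + Φ₁ x t * pdt (pdx q) x t) t :=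
        (hasDerivAt_pdt Φ₁ hΦ₁ x t).mul (hasDerivAt_pdt (pdx q) hpq x t)
      exact this.deriv
    -- step 2+3: pdt (pdx q) = pdx (pdt q) = pdx E
    have hmix : pdt (pdx q) x t
        = pdx (fun y s => sk₁ y s - w y s - q y s * s₁ y s + q y s * r y s) x t := by
      rw [clairaut q hq x t]
      show deriv (fun y => pdt q y t) x = _
      have : (fun y => pdt q y t)
          = fun y => sk₁ y t - w y t - q y t * s₁ y t + q y t * r y t := by
        funext y; exact hstep3 y t
      rw [this]; rfl
    -- step 4: expand pdx E
    have hE : pdx (fun y s => sk₁ y s - w y s - q y s * s₁ y s + q y s * r y s) x t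
        = pdx sk₁ x t - pdx w x t - (pdx q x t * s₁ x t + q x t * pdx s₁ x t)
          + (pdx q x t * r x t + q x t * pdx r x t) := by
      have h : HasDerivAt (fun y => sk₁ y t - w y t - q y t * s₁ y t + q y t * r y t)
          (pdx sk₁ x t - pdx w x t - (pdx q x t * s₁ x t + q x t * pdx s₁ x t)
            + (pdx q x t * r x t + q x t * pdx r x t)) x :=
        ((((hasDerivAt_pdx sk₁ hsk₁ x t).sub (hasDerivAt_pdx w hw x t)).sub
          ((hasDerivAt_pdx q hq x t).mul (hasDerivAt_pdx s₁ hs₁ x t))).add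
          ((hasDerivAt_pdx q hq x t).mul (hasDerivAt_pdx r hr x t)))
      exact h.deriv
    show pdt Φ'k x t = (Φ₁ x t * pdx r x t) * (Φk₁ x t / Φ₁ x t) - Φ₁ x t * pdx w x t
    rw [hprod, hmix, hE, hpot₁, hpotk₁, hflowΦ₁]
    have hqv : q x t * Φ₁ x t = Φk₁ x t := by
      have h0 := hΦ₁ne x t
      simp only [hqdef]; field_simp
    have hrv : r x t * Φ₁ x t = Φ₂ x t := by
      have h0 := hΦ₁ne x t
      simp only [hrdef]; field_simp
    have h1 : Φk₁ x t / Φ₁ x t = q x t := rfl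
    rw [h1]
    linear_combination pdx q x t * hrv - Φ₁ x t * Ψ₁ x t * hqv
  · intro x t
    show pdt Ψ'₁ x t = (1 / Φ₁ x t) * (Φ₂ x t / Φ₁ x t) + (-(s₁ x t) / Φ₁ x t)
    have hdiv : HasDerivAt (fun u => 1 / Φ₁ x u)
        ((0 * Φ₁ x t - 1 * pdt Φ₁ x t) / (Φ₁ x t)^2) t :=
      (hasDerivAt_const t (1:ℝ)).div (hasDerivAt_pdt Φ₁ hΦ₁ x t) (hΦ₁ne x t)
    have : pdt Ψ'₁ x t = (0 * Φ₁ x t - 1 * pdt Φ₁ x t) / (Φ₁ x t)^2 := hdiv.deriv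
    rw [this, hflowΦ₁]
    have h0 := hΦ₁ne x t
    field_simp
    ring
end

section
/- For every 1 ≤ m ≤ k one has ∂̄(W_m·τ) = −W[Φ₁,…,Φ_{m−1},Φ_{m+1}]·τ and ∂̄(𝒲_m·τ) = W[Ψ₁,…,Ψ_{m−1},Ψ_{m+1}]·τ; i.e., the first ghost-symmetry flow of the Darboux-orbit tau-functions W_mτ and 𝒲_mτ is given by the Wronskian with the last entry shifted by one, generalizing the k = 1 relations ∂̄(Φ₁τ) = −Φ₂τ and ∂̄(Ψ₁τ) = Ψ₂τ of the paper's display (tau-P-bt-1). -/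
/-- Wronskian in `x` of an `m`-tuple of functions of `(x, t̄)`:
`det(∂_x^{i−1} f_j)`, with the `0×0` determinant equal to `1`. -/
noncomputable def wronskian (m : ℕ) (g : Fin m → ℝ → ℝ → ℝ) : ℝ → ℝ → ℝ :=
  fun x t =>
    (Matrix.of fun i j : Fin m => iteratedDeriv (i : ℕ) (fun y => g j y t) x).det

/-- `W_m = W[Φ₁,…,Φ_m]` (so `W₀ = 1`). -/
noncomputable def Wr (Φ : ℕ → ℝ → ℝ → ℝ) (m : ℕ) : ℝ → ℝ → ℝ :=
  wronskian m (fun j => Φ ((j : ℕ) + 1))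

/-- `W[Φ₁,…,Φ_{m−1},Φ_{m+1}]`: the Wronskian with the last entry shifted by one. -/
noncomputable def WrShift (Φ : ℕ → ℝ → ℝ → ℝ) (m : ℕ) : ℝ → ℝ → ℝ :=
  wronskian m (fun j => Φ (if (j : ℕ) + 1 = m then m + 1 else (j : ℕ) + 1))

namespace Ghost

/-- We work with `C^∞` (i.e. `ℕ∞` top) smoothness internally. -/
def Sm (f : ℝ → ℝ → ℝ) : Prop := ContDiff ℝ ((⊤ : ℕ∞) : WithTop ℕ∞) (Function.uncurry f)

lemma Smooth2.sm {f : ℝ → ℝ → ℝ} (h : Smooth2 f) : Sm f := h.of_le (by simp)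

lemma smConst (c : ℝ) : Sm (fun _ _ => c) := contDiff_const

lemma smMul {f g : ℝ → ℝ → ℝ} (hf : Sm f) (hg : Sm g) :
    Sm (fun x t => f x t * g x t) := ContDiff.mul hf hg

lemma smAdd {f g : ℝ → ℝ → ℝ} (hf : Sm f) (hg : Sm g) :
    Sm (fun x t => f x t + g x t) := ContDiff.add hf hg

lemma smSliceX {f : ℝ → ℝ → ℝ} (hf : Sm f) (t : ℝ) :
    ContDiff ℝ ((⊤ : ℕ∞) : WithTop ℕ∞) (fun y => f y t) :=
  ContDiff.comp hf (contDiff_id.prodMk contDiff_const)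

lemma smSliceT {f : ℝ → ℝ → ℝ} (hf : Sm f) (x : ℝ) :
    ContDiff ℝ ((⊤ : ℕ∞) : WithTop ℕ∞) (fun u => f x u) := by
  have h : ContDiff ℝ ((⊤ : ℕ∞) : WithTop ℕ∞) (fun u : ℝ => Function.uncurry f (x, u)) :=
    ContDiff.comp hf (contDiff_const.prodMk contDiff_id)
  exact h

lemma one_le_inf : ((⊤ : ℕ∞) : WithTop ℕ∞) ≠ 0 := by
  simp

lemma hasDerivAt_sliceX {f : ℝ → ℝ → ℝ} (hf : Sm f) (x t : ℝ) :
    HasDerivAt (fun y => f y t) (pdx f x t) x :=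
  ((smSliceX hf t).differentiable one_le_inf x).hasDerivAt

lemma hasDerivAt_sliceT {f : ℝ → ℝ → ℝ} (hf : Sm f) (x t : ℝ) :
    HasDerivAt (fun u => f x u) (pdt f x t) t :=
  ((smSliceT hf x).differentiable one_le_inf t).hasDerivAt

lemma pdx_eq_fderiv {f : ℝ → ℝ → ℝ} (hf : Sm f) (x t : ℝ) :
    pdx f x t = fderiv ℝ (Function.uncurry f) (x, t) (1, 0) := by
  have hF : HasFDerivAt (Function.uncurry f) (fderiv ℝ (Function.uncurry f) (x, t)) (x, t) :=
    (hf.differentiable one_le_inf (x, t)).hasFDerivAt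
  have hc : HasDerivAt (fun y : ℝ => (y, t)) ((1 : ℝ), (0 : ℝ)) x :=
    (hasDerivAt_id x).prodMk (hasDerivAt_const x t)
  have h2 : HasDerivAt (fun y => f y t) (fderiv ℝ (Function.uncurry f) (x, t) (1, 0)) x := by
    have := hF.comp_hasDerivAt x hc; exact this
  exact h2.deriv ▸ rfl

lemma pdt_eq_fderiv {f : ℝ → ℝ → ℝ} (hf : Sm f) (x t : ℝ) :
    pdt f x t = fderiv ℝ (Function.uncurry f) (x, t) (0, 1) := by
  have hF : HasFDerivAt (Function.uncurry f) (fderiv ℝ (Function.uncurry f) (x, t)) (x, t) :=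
    (hf.differentiable one_le_inf (x, t)).hasFDerivAt
  have hc : HasDerivAt (fun u : ℝ => (x, u)) ((0 : ℝ), (1 : ℝ)) t :=
    (hasDerivAt_const t x).prodMk (hasDerivAt_id t)
  have h2 : HasDerivAt (fun u => f x u) (fderiv ℝ (Function.uncurry f) (x, t) (0, 1)) t :=
    hF.comp_hasDerivAt t hc
  exact h2.deriv ▸ rfl

lemma smFderivApply {f : ℝ → ℝ → ℝ} (hf : Sm f) (v : ℝ × ℝ) :
    Sm (fun x t => fderiv ℝ (Function.uncurry f) (x, t) v) := by
  have h1 : ContDiff ℝ ((⊤ : ℕ∞) : WithTop ℕ∞) (fun p => fderiv ℝ (Function.uncurry f) p) :=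
    hf.fderiv_right (by exact_mod_cast le_top)
  have h2 : ContDiff ℝ ((⊤ : ℕ∞) : WithTop ℕ∞)
      (fun p : ℝ × ℝ => fderiv ℝ (Function.uncurry f) p v) :=
    h1.clm_apply contDiff_const
  exact h2

lemma smPdx {f : ℝ → ℝ → ℝ} (hf : Sm f) : Sm (pdx f) := by
  have h : pdx f = fun x t => fderiv ℝ (Function.uncurry f) (x, t) (1, 0) := by
    funext x t; exact pdx_eq_fderiv hf x t
  rw [h]; exact smFderivApply hf (1, 0)

lemma smPdt {f : ℝ → ℝ → ℝ} (hf : Sm f) : Sm (pdt f) := by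
  have h : pdt f = fun x t => fderiv ℝ (Function.uncurry f) (x, t) (0, 1) := by
    funext x t; exact pdt_eq_fderiv hf x t
  rw [h]; exact smFderivApply hf (0, 1)

/-- Clairaut: mixed partials commute for smooth functions. -/
lemma clairaut {f : ℝ → ℝ → ℝ} (hf : Sm f) (x t : ℝ) :
    pdt (pdx f) x t = pdx (pdt f) x t := by
  have hsym : IsSymmSndFDerivAt ℝ (Function.uncurry f) (x, t) :=
    (hf.contDiffAt).isSymmSndFDerivAt (by rw [minSmoothness_of_isRCLikeNormedField]; exact WithTop.coe_le_coe.mpr le_top)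
  have h1 : pdt (pdx f) x t
      = fderiv ℝ (fun p : ℝ × ℝ => fderiv ℝ (Function.uncurry f) p (1, 0)) (x, t) (0, 1) := by
    have h := pdt_eq_fderiv (smPdx hf) x t
    rw [h]
    congr 1
    have : Function.uncurry (pdx f) = fun p : ℝ × ℝ => fderiv ℝ (Function.uncurry f) p (1, 0) := by
      funext p
      exact pdx_eq_fderiv hf p.1 p.2
    rw [this]
  have h2 : pdx (pdt f) x t
      = fderiv ℝ (fun p : ℝ × ℝ => fderiv ℝ (Function.uncurry f) p (0, 1)) (x, t) (1, 0) := by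
    have h := pdx_eq_fderiv (smPdt hf) x t
    rw [h]
    congr 1
    have : Function.uncurry (pdt f) = fun p : ℝ × ℝ => fderiv ℝ (Function.uncurry f) p (0, 1) := by
      funext p
      exact pdt_eq_fderiv hf p.1 p.2
    rw [this]
  have hd : ContDiff ℝ ((⊤ : ℕ∞) : WithTop ℕ∞) (fun p => fderiv ℝ (Function.uncurry f) p) :=
    hf.fderiv_right (by exact_mod_cast le_top)
  have hda : DifferentiableAt ℝ (fun p => fderiv ℝ (Function.uncurry f) p) (x, t) :=
    (hd.differentiable one_le_inf) (x, t)
  have hc1 : fderiv ℝ (fun p : ℝ × ℝ => fderiv ℝ (Function.uncurry f) p (1, 0)) (x, t) (0, 1)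
      = fderiv ℝ (fderiv ℝ (Function.uncurry f)) (x, t) (0, 1) (1, 0) := by
    rw [fderiv_clm_apply hda (differentiableAt_const _)]
    simp
  have hc2 : fderiv ℝ (fun p : ℝ × ℝ => fderiv ℝ (Function.uncurry f) p (0, 1)) (x, t) (1, 0)
      = fderiv ℝ (fderiv ℝ (Function.uncurry f)) (x, t) (1, 0) (0, 1) := by
    rw [fderiv_clm_apply hda (differentiableAt_const _)]
    simp
  rw [h1, h2, hc1, hc2]
  exact hsym (0, 1) (1, 0)




/-- iterated partial x-derivative -/
noncomputable def itx : ℕ → (ℝ → ℝ → ℝ) → (ℝ → ℝ → ℝ)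
  | 0, f => f
  | n + 1, f => pdx (itx n f)

lemma smItx {f : ℝ → ℝ → ℝ} (hf : Sm f) (n : ℕ) : Sm (itx n f) := by
  induction n with
  | zero => exact hf
  | succ n ih => exact smPdx ih

lemma pdt_itx {f : ℝ → ℝ → ℝ} (hf : Sm f) (n : ℕ) :
    pdt (itx n f) = itx n (pdt f) := by
  induction n with
  | zero => rfl
  | succ n ih =>
    show pdt (pdx (itx n f)) = pdx (itx n (pdt f))
    rw [← ih]
    funext x t
    exact clairaut (smItx hf n) x t

lemma itx_eq_iteratedDeriv {f : ℝ → ℝ → ℝ} (n : ℕ) (t : ℝ) :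
    (fun x => itx n f x t) = iteratedDeriv n (fun y => f y t) := by
  induction n with
  | zero => simp [itx, iteratedDeriv_zero]
  | succ n ih =>
    funext x
    show pdx (itx n f) x t = iteratedDeriv (n + 1) (fun y => f y t) x
    rw [iteratedDeriv_succ, ← ih]
    rfl

/-- pointwise linearity of itx -/
lemma itx_add_mul {f g : ℝ → ℝ → ℝ} (hf : Sm f) (hg : Sm g) (c : ℝ) (n : ℕ) :
    ∀ x t, itx n (fun x t => f x t + c * g x t) x t = itx n f x t + c * itx n g x t := by
  induction n with
  | zero => intro x t; rfl
  | succ n ih =>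
    intro x t
    show pdx (itx n fun x t => f x t + c * g x t) x t = _
    have hfn := hasDerivAt_sliceX (smItx hf n) x t
    have hgn := hasDerivAt_sliceX (smItx hg n) x t
    have h : HasDerivAt (fun y => itx n (fun x t => f x t + c * g x t) y t)
        (pdx (itx n f) x t + c * pdx (itx n g) x t) x := by
      have heq : (fun y => itx n (fun x t => f x t + c * g x t) y t)
          = fun y => itx n f y t + c * itx n g y t := by
        funext y; exact ih y t
      rw [heq]
      exact hfn.add ((hgn.const_mul c))
    exact h.deriv

/-- pdx product rule, pointwise -/
lemma pdx_mul {f g : ℝ → ℝ → ℝ} (hf : Sm f) (hg : Sm g) (x t : ℝ) :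
    pdx (fun x t => f x t * g x t) x t = pdx f x t * g x t + f x t * pdx g x t := by
  exact ((hasDerivAt_sliceX hf x t).mul (hasDerivAt_sliceX hg x t)).deriv


/-- coefficient matrix for the Leibniz-type expansion, defined by recursion -/
noncomputable def Mc (F1 G : ℝ → ℝ → ℝ) : ℕ → ℕ → ℝ → ℝ → ℝ
  | 0, _ => fun _ _ => 0
  | i + 1, 0 => fun x t => pdx (Mc F1 G i 0) x t + G x t * itx i F1 x t
  | i + 1, l + 1 => fun x t => pdx (Mc F1 G i (l + 1)) x t + Mc F1 G i l x t

lemma smMc {F1 G : ℝ → ℝ → ℝ} (hF1 : Sm F1) (hG : Sm G) (i l : ℕ) :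
    Sm (Mc F1 G i l) := by
  induction i generalizing l with
  | zero => exact smConst 0
  | succ i ih =>
    cases l with
    | zero => exact smAdd (smPdx (ih 0)) (smMul hG (smItx hF1 i))
    | succ l => exact smAdd (smPdx (ih (l + 1))) (ih l)

lemma Mc_vanish {F1 G : ℝ → ℝ → ℝ} : ∀ i l, i ≤ l → ∀ x t, Mc F1 G i l x t = 0 := by
  intro i
  induction i with
  | zero => intro l _ x t; rfl
  | succ i ih =>
    intro l hl x t
    obtain ⟨l', rfl⟩ : ∃ l', l = l' + 1 := ⟨l - 1, by omega⟩
    show pdx (Mc F1 G i (l' + 1)) x t + Mc F1 G i l' x t = 0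
    have h1 : pdx (Mc F1 G i (l' + 1)) x t = 0 := by
      have : (fun y => Mc F1 G i (l' + 1) y t) = fun _ => (0 : ℝ) := by
        funext y; exact ih (l' + 1) (by omega) y t
      show deriv (fun y => Mc F1 G i (l' + 1) y t) x = 0
      rw [this, deriv_const]
    rw [h1, ih l' (by omega) x t, add_zero]

lemma pdx_Mc_vanish {F1 G : ℝ → ℝ → ℝ} (i l : ℕ) (h : i ≤ l) (x t : ℝ) :
    pdx (Mc F1 G i l) x t = 0 := by
  have : (fun y => Mc F1 G i l y t) = fun _ => (0 : ℝ) := by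
    funext y; exact Mc_vanish i l h y t
  show deriv (fun y => Mc F1 G i l y t) x = 0
  rw [this, deriv_const]

/-- Key expansion: `∂ₓⁱ (F1·σ) = σ·∂ₓⁱF1 + ∑_{l<i} Mc i l · ∂ₓˡ F` when `∂ₓσ = G·F`. -/
lemma itx_mul_potential {F1 G σ F : ℝ → ℝ → ℝ} (hF1 : Sm F1) (hG : Sm G)
    (hσ : Sm σ) (hF : Sm F) (hpot : ∀ x t, pdx σ x t = G x t * F x t) :
    ∀ i x t, itx i (fun x t => F1 x t * σ x t) x t
      = σ x t * itx i F1 x t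
        + ∑ l ∈ Finset.range i, Mc F1 G i l x t * itx l F x t := by
  intro i
  induction i with
  | zero => intro x t; simp [itx, mul_comm]
  | succ i ih =>
    intro x t
    have hD : HasDerivAt (fun y => itx i (fun x t => F1 x t * σ x t) y t)
        ((G x t * F x t) * itx i F1 x t + σ x t * itx (i + 1) F1 x t
          + ∑ l ∈ Finset.range i,
            (pdx (Mc F1 G i l) x t * itx l F x t + Mc F1 G i l x t * itx (l + 1) F x t)) x := by
      have heq : (fun y => itx i (fun x t => F1 x t * σ x t) y t)
          = fun y => σ y t * itx i F1 y t
            + ∑ l ∈ Finset.range i, Mc F1 G i l y t * itx l F y t := by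
        funext y; exact ih y t
      rw [heq]
      have h1 : HasDerivAt (fun y => σ y t * itx i F1 y t)
          ((G x t * F x t) * itx i F1 x t + σ x t * itx (i + 1) F1 x t) x := by
        have := (hasDerivAt_sliceX hσ x t).mul (hasDerivAt_sliceX (smItx hF1 i) x t)
        rw [hpot x t] at this
        exact this
      have h2 : HasDerivAt (fun y => ∑ l ∈ Finset.range i, Mc F1 G i l y t * itx l F y t)
          (∑ l ∈ Finset.range i,
            (pdx (Mc F1 G i l) x t * itx l F x t + Mc F1 G i l x t * itx (l + 1) F x t)) x := by
        have := HasDerivAt.fun_sum (u := Finset.range i)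
          (A := fun l y => Mc F1 G i l y t * itx l F y t)
          (A' := fun l => pdx (Mc F1 G i l) x t * itx l F x t
            + Mc F1 G i l x t * itx (l + 1) F x t) (x := x)
          (fun l _ => (hasDerivAt_sliceX (smMc hF1 hG i l) x t).mul
            (hasDerivAt_sliceX (smItx hF l) x t))
        exact this
      exact h1.add h2
    show pdx (itx i fun x t => F1 x t * σ x t) x t = _
    rw [show pdx (itx i fun x t => F1 x t * σ x t) x t
        = deriv (fun y => itx i (fun x t => F1 x t * σ x t) y t) x from rfl, hD.deriv]
    -- now pure algebra with sums
    have hsum : ∑ l ∈ Finset.range (i + 1), Mc F1 G (i + 1) l x t * itx l F x t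
        = ∑ l ∈ Finset.range i,
            (pdx (Mc F1 G i (l + 1)) x t + Mc F1 G i l x t) * itx (l + 1) F x t
          + (pdx (Mc F1 G i 0) x t + G x t * itx i F1 x t) * itx 0 F x t := by
      rw [Finset.sum_range_succ']
      rfl
    rw [hsum]
    have hshift : ∑ l ∈ Finset.range i, pdx (Mc F1 G i l) x t * itx l F x t
        = ∑ l ∈ Finset.range i, pdx (Mc F1 G i (l + 1)) x t * itx (l + 1) F x t
          + pdx (Mc F1 G i 0) x t * itx 0 F x t := by
      have h1 : ∑ l ∈ Finset.range (i + 1), pdx (Mc F1 G i l) x t * itx l F x t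
          = ∑ l ∈ Finset.range i, pdx (Mc F1 G i (l + 1)) x t * itx (l + 1) F x t
            + pdx (Mc F1 G i 0) x t * itx 0 F x t := Finset.sum_range_succ' _ i
      rw [← h1, Finset.sum_range_succ, pdx_Mc_vanish i i le_rfl, zero_mul, add_zero]
    have hexp : ∑ l ∈ Finset.range i,
          (pdx (Mc F1 G i l) x t * itx l F x t + Mc F1 G i l x t * itx (l + 1) F x t)
        = ∑ l ∈ Finset.range i, pdx (Mc F1 G i l) x t * itx l F x t
          + ∑ l ∈ Finset.range i, Mc F1 G i l x t * itx (l + 1) F x t :=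
      Finset.sum_add_distrib
    rw [hexp, hshift]
    have hdist : ∑ l ∈ Finset.range i,
          (pdx (Mc F1 G i (l + 1)) x t + Mc F1 G i l x t) * itx (l + 1) F x t
        = ∑ l ∈ Finset.range i, pdx (Mc F1 G i (l + 1)) x t * itx (l + 1) F x t
          + ∑ l ∈ Finset.range i, Mc F1 G i l x t * itx (l + 1) F x t := by
      rw [← Finset.sum_add_distrib]
      exact Finset.sum_congr rfl fun l _ => add_mul _ _ _
    rw [hdist]
    show _ = σ x t * itx (i + 1) F1 x t + _
    have : itx 0 F x t = F x t := rfl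
    rw [this]
    ring


open Matrix in
lemma det_updateCol_expand {m : ℕ} (M : Matrix (Fin m) (Fin m) ℝ) (j : Fin m)
    (v : Fin m → ℝ) :
    (M.updateCol j v).det
      = ∑ σ : Equiv.Perm (Fin m), (Equiv.Perm.sign σ : ℝ)
          * (v (σ j) * ∏ i ∈ Finset.univ.erase j, M (σ i) i) := by
  rw [Matrix.det_apply']
  refine Finset.sum_congr rfl fun σ _ => ?_
  congr 1
  rw [← Finset.mul_prod_erase Finset.univ _ (Finset.mem_univ j)]
  congr 1
  · simp [Matrix.updateCol_apply]
  · refine Finset.prod_congr rfl fun i hi => ?_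
    have : i ≠ j := Finset.ne_of_mem_erase hi
    simp [Matrix.updateCol_apply, this]

open Matrix in
lemma hasDerivAt_det {m : ℕ} (B : ℝ → Matrix (Fin m) (Fin m) ℝ)
    (A' : Matrix (Fin m) (Fin m) ℝ) (t₀ : ℝ)
    (h : ∀ i j, HasDerivAt (fun t => B t i j) (A' i j) t₀) :
    HasDerivAt (fun t => (B t).det)
      (∑ j, ((B t₀).updateCol j (fun i => A' i j)).det) t₀ := by
  have h1 : ∀ σ : Equiv.Perm (Fin m),
      HasDerivAt (fun t => ∏ i, B t (σ i) i)
        (∑ j, (∏ i ∈ Finset.univ.erase j, B t₀ (σ i) i) • A' (σ j) j) t₀ := by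
    intro σ
    exact HasDerivAt.fun_finsetProd (u := Finset.univ) (f := fun i t => B t (σ i) i)
      (f' := fun i => A' (σ i) i) (fun i _ => h (σ i) i)
  have h2 : HasDerivAt (fun t => (B t).det)
      (∑ σ : Equiv.Perm (Fin m), (Equiv.Perm.sign σ : ℝ)
        * ∑ j, (∏ i ∈ Finset.univ.erase j, B t₀ (σ i) i) • A' (σ j) j) t₀ := by
    have heq : (fun t => (B t).det)
        = fun t => ∑ σ : Equiv.Perm (Fin m), (Equiv.Perm.sign σ : ℝ) * ∏ i, B t (σ i) i := by
      funext t; rw [Matrix.det_apply']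
    rw [heq]
    exact HasDerivAt.fun_sum fun σ _ => (h1 σ).const_mul _
  convert h2 using 1
  have hR : ∀ σ : Equiv.Perm (Fin m), (Equiv.Perm.sign σ : ℝ)
        * ∑ j, (∏ i ∈ Finset.univ.erase j, B t₀ (σ i) i) • A' (σ j) j
      = ∑ j, (Equiv.Perm.sign σ : ℝ)
        * (A' (σ j) j * ∏ i ∈ Finset.univ.erase j, B t₀ (σ i) i) := by
    intro σ
    rw [Finset.mul_sum]
    refine Finset.sum_congr rfl fun j _ => ?_
    rw [smul_eq_mul]; ring
  calc ∑ j, ((B t₀).updateCol j fun i => A' i j).det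
      = ∑ j, ∑ σ : Equiv.Perm (Fin m), (Equiv.Perm.sign σ : ℝ)
          * (A' (σ j) j * ∏ i ∈ Finset.univ.erase j, B t₀ (σ i) i) :=
        Finset.sum_congr rfl fun j _ => det_updateCol_expand _ _ _
    _ = ∑ σ : Equiv.Perm (Fin m), ∑ j, (Equiv.Perm.sign σ : ℝ)
          * (A' (σ j) j * ∏ i ∈ Finset.univ.erase j, B t₀ (σ i) i) := Finset.sum_comm
    _ = _ := Finset.sum_congr rfl fun σ _ => (hR σ).symm


open Matrix in
lemma sum_det_updateCol_smul_diag {m : ℕ} (A N : Matrix (Fin m) (Fin m) ℝ) :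
    ∑ j, (A.updateCol j (fun i => ∑ l, N i l * A l j)).det
      = A.det * ∑ l, N l l := by
  have h1 : ∀ j : Fin m, (A.updateCol j (fun i => ∑ l, N i l * A l j)).det
      = ∑ l, A l j * cramer A (fun i => N i l) j := by
    intro j
    rw [← Matrix.cramer_apply]
    have hv : (fun i => ∑ l, N i l * A l j) = ∑ l, A l j • (fun i => N i l) := by
      funext i
      simp [Finset.sum_apply, mul_comm]
    rw [hv, map_sum]
    simp [Finset.sum_apply]
  calc ∑ j, (A.updateCol j (fun i => ∑ l, N i l * A l j)).det
      = ∑ j, ∑ l, A l j * cramer A (fun i => N i l) j :=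
        Finset.sum_congr rfl fun j _ => h1 j
    _ = ∑ l, ∑ j, A l j * cramer A (fun i => N i l) j := Finset.sum_comm
    _ = ∑ l : Fin m, (A *ᵥ cramer A (fun i => N i l)) l := rfl
    _ = ∑ l : Fin m, (A.det • fun i => N i l) l := by
        refine Finset.sum_congr rfl fun l _ => ?_
        rw [Matrix.mulVec_cramer]
    _ = A.det * ∑ l, N l l := by
        rw [Finset.mul_sum]
        refine Finset.sum_congr rfl fun l _ => ?_
        simp [smul_eq_mul]


/-- The main generic computation: the ghost flow of a Wronskian. -/
lemma key_hasDerivAt (k m : ℕ) (F σ : ℕ → ℝ → ℝ → ℝ) (G : ℝ → ℝ → ℝ) (ε : ℝ)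
    (hF : ∀ j, 1 ≤ j → j ≤ k + 1 → Sm (F j))
    (hσ : ∀ j, 1 ≤ j → j ≤ k → Sm (σ j))
    (hG : Sm G)
    (hpot : ∀ j, 1 ≤ j → j ≤ k → ∀ x t, pdx (σ j) x t = G x t * F j x t)
    (hflow : ∀ j, 1 ≤ j → j ≤ k → ∀ x t,
      pdt (F j) x t = F 1 x t * σ j x t + ε * F (j + 1) x t)
    (hm : 1 ≤ m) (hmk : m ≤ k) (x t : ℝ) :
    HasDerivAt (fun u => Wr F m x u)
      (σ 1 x t * Wr F m x t + ε * WrShift F m x t) t := by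
  have hmpos : 0 < m := hm
  -- the matrix of iterated x-derivatives
  set B : ℝ → Matrix (Fin m) (Fin m) ℝ :=
    fun u => Matrix.of fun i j : Fin m => itx (i : ℕ) (F ((j : ℕ) + 1)) x u with hB
  have hsmF : ∀ j : Fin m, Sm (F ((j : ℕ) + 1)) := fun j =>
    hF _ (Nat.le_add_left 1 _) (by omega)
  have hWB : ∀ u, Wr F m x u = (B u).det := by
    intro u
    unfold Wr wronskian
    congr 1
    ext i j
    simp only [Matrix.of_apply, hB]
    rw [← itx_eq_iteratedDeriv]
  -- derivative of each entry
  set A' : Matrix (Fin m) (Fin m) ℝ :=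
    Matrix.of fun i j : Fin m => itx (i : ℕ) (pdt (F ((j : ℕ) + 1))) x t with hA'
  have hEnt : ∀ i j : Fin m, HasDerivAt (fun u => B u i j) (A' i j) t := by
    intro i j
    have hsm := smItx (hsmF j) (i : ℕ)
    have h := hasDerivAt_sliceT hsm x t
    rw [pdt_itx (hsmF j) (i : ℕ)] at h
    exact h
  have hDet := hasDerivAt_det B A' t hEnt
  -- decompose A'
  set z : Fin m := ⟨0, hmpos⟩ with hz
  set N : Fin m → Fin m → ℝ := fun i l => Mc (F 1) G (i : ℕ) (l : ℕ) x t with hN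
  have hA'dec : ∀ i j : Fin m, A' i j
      = σ ((j : ℕ) + 1) x t * B t i z
        + (∑ l : Fin m, N i l * B t l j)
        + ε * itx (i : ℕ) (F ((j : ℕ) + 2)) x t := by
    intro i j
    have hj1 : 1 ≤ (j : ℕ) + 1 := Nat.le_add_left 1 _
    have hjk : (j : ℕ) + 1 ≤ k := by omega
    have hflowfun : pdt (F ((j : ℕ) + 1))
        = fun x t => F 1 x t * σ ((j : ℕ) + 1) x t + ε * F ((j : ℕ) + 2) x t := by
      funext x t
      exact hflow _ hj1 hjk x t
    have hsm1 : Sm (fun x t => F 1 x t * σ ((j : ℕ) + 1) x t) :=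
      smMul (hF 1 le_rfl (by omega)) (hσ _ hj1 hjk)
    have hsm2 : Sm (F ((j : ℕ) + 2)) := hF _ (by omega) (by omega)
    have h1 : A' i j = itx (i : ℕ) (fun x t => F 1 x t * σ ((j : ℕ) + 1) x t) x t
        + ε * itx (i : ℕ) (F ((j : ℕ) + 2)) x t := by
      show itx (i : ℕ) (pdt (F ((j : ℕ) + 1))) x t = _
      rw [hflowfun]
      exact itx_add_mul hsm1 hsm2 ε (i : ℕ) x t
    have h2 : itx (i : ℕ) (fun x t => F 1 x t * σ ((j : ℕ) + 1) x t) x t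
        = σ ((j : ℕ) + 1) x t * itx (i : ℕ) (F 1) x t
          + ∑ l ∈ Finset.range (i : ℕ), Mc (F 1) G (i : ℕ) l x t
            * itx l (F ((j : ℕ) + 1)) x t :=
      itx_mul_potential (hF 1 le_rfl (by omega)) hG (hσ _ hj1 hjk) (hsmF j)
        (hpot _ hj1 hjk) (i : ℕ) x t
    have h3 : ∑ l ∈ Finset.range (i : ℕ), Mc (F 1) G (i : ℕ) l x t
          * itx l (F ((j : ℕ) + 1)) x t
        = ∑ l : Fin m, N i l * B t l j := by
      have e1 : ∑ l : Fin m, N i l * B t l j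
          = ∑ l ∈ Finset.range m, Mc (F 1) G (i : ℕ) l x t
              * itx l (F ((j : ℕ) + 1)) x t := by
        simp only [hN, hB, Matrix.of_apply]
        exact Fin.sum_univ_eq_sum_range
          (fun l => Mc (F 1) G (i : ℕ) l x t * itx l (F ((j : ℕ) + 1)) x t) m
      rw [e1]
      have him : (i : ℕ) ≤ m := le_of_lt i.isLt
      rw [← Finset.sum_range_add_sum_Ico _ him]
      have : ∑ l ∈ Finset.Ico (i : ℕ) m, Mc (F 1) G (i : ℕ) l x t
          * itx l (F ((j : ℕ) + 1)) x t = 0 := by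
        refine Finset.sum_eq_zero fun l hl => ?_
        rw [Mc_vanish (i : ℕ) l (Finset.mem_Ico.mp hl).1 x t, zero_mul]
      rw [this, add_zero]
    have h4 : itx (i : ℕ) (F 1) x t = B t i z := by
      simp only [hB, Matrix.of_apply, hz]
    rw [h1, h2, h3, h4]
  -- now compute the sum of determinants
  have hsplit : ∀ j : Fin m, ((B t).updateCol j (fun i => A' i j)).det
      = σ ((j : ℕ) + 1) x t * ((B t).updateCol j (fun i => B t i z)).det
        + ((B t).updateCol j (fun i => ∑ l : Fin m, N i l * B t l j)).det
        + ε * ((B t).updateCol j (fun i => itx (i : ℕ) (F ((j : ℕ) + 2)) x t)).det := by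
    intro j
    rw [show (fun i => A' i j)
        = σ ((j : ℕ) + 1) x t • (fun i : Fin m => B t i z)
          + ((fun i : Fin m => ∑ l : Fin m, N i l * B t l j)
            + ε • fun i : Fin m => itx (i : ℕ) (F ((j : ℕ) + 2)) x t) from by
      funext i
      simp only [Pi.add_apply, Pi.smul_apply, smul_eq_mul]
      rw [hA'dec i j]
      exact add_assoc _ _ _]
    rw [← Matrix.cramer_apply, map_add, map_add, map_smul, map_smul]
    simp only [Matrix.cramer_apply, Pi.add_apply, Pi.smul_apply, smul_eq_mul]
    ring
  -- evaluate the three sums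
  have hS1 : ∑ j : Fin m, σ ((j : ℕ) + 1) x t
        * ((B t).updateCol j (fun i => B t i z)).det
      = σ 1 x t * (B t).det := by
    rw [Finset.sum_eq_single z]
    · rw [Matrix.updateCol_eq_self (B t) z]
    · intro j _ hj
      rw [Matrix.det_updateCol_eq_zero (fun h => hj h.symm), mul_zero]
    · intro h; exact absurd (Finset.mem_univ z) h
  have hS2 : ∑ j : Fin m, ((B t).updateCol j (fun i => ∑ l : Fin m, N i l * B t l j)).det
      = 0 := by
    rw [sum_det_updateCol_smul_diag (B t) N]
    have : ∑ l : Fin m, N l l = 0 := by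
      refine Finset.sum_eq_zero fun l _ => ?_
      simp only [hN]
      exact Mc_vanish _ _ le_rfl x t
    rw [this, mul_zero]
  set last : Fin m := ⟨m - 1, by omega⟩ with hlast
  have hS3 : ∑ j : Fin m, ε
        * ((B t).updateCol j (fun i => itx (i : ℕ) (F ((j : ℕ) + 2)) x t)).det
      = ε * WrShift F m x t := by
    rw [Finset.sum_eq_single last]
    · congr 1
      have hl2 : (last : ℕ) + 2 = m + 1 := by simp only [hlast]; omega
      unfold WrShift wronskian
      congr 1
      ext i j'
      rw [Matrix.updateCol_apply]
      by_cases hj' : j' = last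
      · have hcond : (j' : ℕ) + 1 = m := by
          rw [hj', hlast]; show m - 1 + 1 = m; omega
        rw [if_pos hj', hl2, Matrix.of_apply]
        simp only [if_pos hcond]
        rw [← itx_eq_iteratedDeriv]
      · have hcond : ¬((j' : ℕ) + 1 = m) := by
          intro hc
          apply hj'
          apply Fin.ext
          show (j' : ℕ) = m - 1
          omega
        rw [if_neg hj', Matrix.of_apply]
        simp only [if_neg hcond]
        show itx ((i : ℕ)) (F ((j' : ℕ) + 1)) x t = _
        rw [← itx_eq_iteratedDeriv]
    · intro j _ hj
      have hjlt : (j : ℕ) + 1 < m := by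
        have := j.isLt
        rcases Nat.lt_or_ge ((j : ℕ) + 1) m with h | h
        · exact h
        · exfalso; apply hj; apply Fin.ext; simp only [hlast]; omega
      set jsucc : Fin m := ⟨(j : ℕ) + 1, hjlt⟩ with hjsucc
      have hvec : (fun i : Fin m => itx (i : ℕ) (F ((j : ℕ) + 2)) x t)
          = fun i => B t i jsucc := by
        funext i
        simp only [hB, Matrix.of_apply, hjsucc]
      rw [hvec, Matrix.det_updateCol_eq_zero
        (show jsucc ≠ j from fun h => by
          have : ((j : ℕ) + 1) = (j : ℕ) := congrArg Fin.val h
          omega), mul_zero]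
    · intro h; exact absurd (Finset.mem_univ last) h
  have hval : ∑ j : Fin m, ((B t).updateCol j fun i => A' i j).det
      = σ 1 x t * Wr F m x t + ε * WrShift F m x t := by
    calc ∑ j : Fin m, ((B t).updateCol j fun i => A' i j).det
        = ∑ j : Fin m, (σ ((j : ℕ) + 1) x t * ((B t).updateCol j (fun i => B t i z)).det
            + ((B t).updateCol j (fun i => ∑ l : Fin m, N i l * B t l j)).det
            + ε * ((B t).updateCol j
                (fun i => itx (i : ℕ) (F ((j : ℕ) + 2)) x t)).det) :=
          Finset.sum_congr rfl fun j _ => hsplit j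
      _ = (∑ j : Fin m, σ ((j : ℕ) + 1) x t
              * ((B t).updateCol j (fun i => B t i z)).det)
          + (∑ j : Fin m, ((B t).updateCol j
              (fun i => ∑ l : Fin m, N i l * B t l j)).det)
          + ∑ j : Fin m, ε * ((B t).updateCol j
              (fun i => itx (i : ℕ) (F ((j : ℕ) + 2)) x t)).det := by
          rw [Finset.sum_add_distrib, Finset.sum_add_distrib]
      _ = σ 1 x t * Wr F m x t + ε * WrShift F m x t := by
          rw [hS1, hS2, hS3, hWB t]; ring
  have hfun : (fun u => Wr F m x u) = fun u => (B u).det := funext hWB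
  rw [hfun]
  exact hval ▸ hDet


end Ghost

open Ghost

/-- for `1 ≤ m ≤ k`, `∂̄(W_m·τ) = −W[Φ₁,…,Φ_{m−1},Φ_{m+1}]·τ` and
`∂̄(𝒲_m·τ) = W[Ψ₁,…,Ψ_{m−1},Ψ_{m+1}]·τ`. Here `sh j` stands for `ŝ_j`. -/
theorem ghost_flow_of_orbit_tau_functions
    (k : ℕ) (Φ Ψ s sh : ℕ → ℝ → ℝ → ℝ) (τ : ℝ → ℝ → ℝ)
    (hΦ : ∀ j, 1 ≤ j → j ≤ k + 1 → Smooth2 (Φ j))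
    (hΨ : ∀ j, 1 ≤ j → j ≤ k + 1 → Smooth2 (Ψ j))
    (hs : ∀ j, 1 ≤ j → j ≤ k → Smooth2 (s j))
    (hsh : ∀ j, 1 ≤ j → j ≤ k → Smooth2 (sh j))
    (hτ : Smooth2 τ)
    (hpotΦ : ∀ j, 1 ≤ j → j ≤ k → ∀ x t, pdx (s j) x t = Ψ 1 x t * Φ j x t)
    (hpotΨ : ∀ j, 1 ≤ j → j ≤ k → ∀ x t, pdx (sh j) x t = Φ 1 x t * Ψ j x t)
    (hsh₁ : ∀ x t, sh 1 x t = s 1 x t)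
    (hflowΦ : ∀ j, 1 ≤ j → j ≤ k → ∀ x t,
      pdt (Φ j) x t = Φ 1 x t * s j x t - Φ (j + 1) x t)
    (hflowΨ : ∀ j, 1 ≤ j → j ≤ k → ∀ x t,
      pdt (Ψ j) x t = Ψ 1 x t * sh j x t + Ψ (j + 1) x t)
    (hτflow : ∀ x t, pdt τ x t = -(s 1 x t) * τ x t) :
    ∀ m, 1 ≤ m → m ≤ k → ∀ x t,
      pdt (fun y u => Wr Φ m y u * τ y u) x t = -(WrShift Φ m x t) * τ x t ∧
      pdt (fun y u => Wr Ψ m y u * τ y u) x t = WrShift Ψ m x t * τ x t := by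
  intro m hm hmk x t
  have hτd : HasDerivAt (fun u => τ x u) (-(s 1 x t) * τ x t) t := by
    have h := hasDerivAt_sliceT (Smooth2.sm hτ) x t
    rwa [hτflow x t] at h
  constructor
  · have hW := key_hasDerivAt k m Φ s (Ψ 1) (-1)
      (fun j h1 h2 => Smooth2.sm (hΦ j h1 h2)) (fun j h1 h2 => Smooth2.sm (hs j h1 h2))
      (Smooth2.sm (hΨ 1 le_rfl (by omega))) hpotΦ
      (fun j h1 h2 x t => by rw [hflowΦ j h1 h2 x t]; ring) hm hmk x t
    have hprod := hW.fun_mul hτd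
    have : pdt (fun y u => Wr Φ m y u * τ y u) x t
        = deriv (fun u => Wr Φ m x u * τ x u) t := rfl
    rw [this, hprod.deriv]
    ring
  · have hW := key_hasDerivAt k m Ψ sh (Φ 1) 1
      (fun j h1 h2 => Smooth2.sm (hΨ j h1 h2)) (fun j h1 h2 => Smooth2.sm (hsh j h1 h2))
      (Smooth2.sm (hΦ 1 le_rfl (by omega))) hpotΨ
      (fun j h1 h2 x t => by rw [hflowΨ j h1 h2 x t]; ring) hm hmk x t
    have hprod := hW.fun_mul hτd
    have : pdt (fun y u => Wr Ψ m y u * τ y u) x t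
        = deriv (fun u => Wr Ψ m x u * τ x u) t := rfl
    rw [this, hprod.deriv, hsh₁ x t]
    ring
end

section
/- For every 1 ≤ m ≤ k, the t̄-derivative of the eigenfunction Wronskian is ∂̄W_m = s₁·W_m − W[Φ₁,…,Φ_{m−1},Φ_{m+1}], where the last Wronskian has the final entry Φ_m replaced by Φ_{m+1}. -/
open scoped ContDiff

section GhostAux

theorem ghost_smooth_iteratedDeriv {f : ℝ → ℝ} (h : ContDiff ℝ ∞ f) (n : ℕ) :
    ContDiff ℝ ∞ (iteratedDeriv n f) := by
  rw [iteratedDeriv_eq_iterate]; exact h.iterate_deriv n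

theorem ghost_smooth_deriv {f : ℝ → ℝ} (h : ContDiff ℝ ∞ f) : ContDiff ℝ ∞ (deriv f) :=
  (contDiff_infty_iff_deriv.mp h).2

theorem ghost_pdx_eq (f : ℝ → ℝ → ℝ) (h : Smooth2 f) (x t : ℝ) :
    pdx f x t = fderiv ℝ (Function.uncurry f) (x, t) (1, 0) := by
  have hd : HasDerivAt (fun y => f y t) (fderiv ℝ (Function.uncurry f) (x,t) (1,0)) x := by
    have h1 : HasDerivAt (fun y : ℝ => (y, t)) ((1:ℝ), (0:ℝ)) x :=
      HasDerivAt.prodMk (hasDerivAt_id x) (hasDerivAt_const x t)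
    exact ((h.differentiable (by simp) (x,t)).hasFDerivAt).comp_hasDerivAt x h1
  exact hd.deriv

theorem ghost_pdt_eq (f : ℝ → ℝ → ℝ) (h : Smooth2 f) (x t : ℝ) :
    pdt f x t = fderiv ℝ (Function.uncurry f) (x, t) (0, 1) := by
  have hd : HasDerivAt (fun s => f x s) (fderiv ℝ (Function.uncurry f) (x,t) (0,1)) t := by
    have h1 : HasDerivAt (fun s : ℝ => (x, s)) ((0:ℝ), (1:ℝ)) t :=
      HasDerivAt.prodMk (hasDerivAt_const t x) (hasDerivAt_id t)
    exact ((h.differentiable (by simp) (x,t)).hasFDerivAt).comp_hasDerivAt t h1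
  exact hd.deriv

theorem ghost_smooth_pdx (f : ℝ → ℝ → ℝ) (h : Smooth2 f) : Smooth2 (pdx f) := by
  have key : Function.uncurry (pdx f) = fun p : ℝ × ℝ =>
      fderiv ℝ (Function.uncurry f) p ((1:ℝ), (0:ℝ)) :=
    funext fun p => ghost_pdx_eq f h p.1 p.2
  rw [Smooth2, key]
  exact (h.fderiv_right (m := (⊤ : ℕ∞)) (by simp)).clm_apply contDiff_const

theorem ghost_smooth_pdt (f : ℝ → ℝ → ℝ) (h : Smooth2 f) : Smooth2 (pdt f) := by
  have key : Function.uncurry (pdt f) = fun p : ℝ × ℝ =>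
      fderiv ℝ (Function.uncurry f) p ((0:ℝ), (1:ℝ)) :=
    funext fun p => ghost_pdt_eq f h p.1 p.2
  rw [Smooth2, key]
  exact (h.fderiv_right (m := (⊤ : ℕ∞)) (by simp)).clm_apply contDiff_const

theorem ghost_pdt_pdx_comm (f : ℝ → ℝ → ℝ) (h : Smooth2 f) (x t : ℝ) :
    pdt (pdx f) x t = pdx (pdt f) x t := by
  have hsymm : ∀ v w, fderiv ℝ (fderiv ℝ (Function.uncurry f)) (x,t) v w
      = fderiv ℝ (fderiv ℝ (Function.uncurry f)) (x,t) w v := fun v w =>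
    (h.contDiffAt.isSymmSndFDerivAt (by rw [minSmoothness_of_isRCLikeNormedField]; exact WithTop.coe_le_coe.2 (le_top : (2 : ℕ∞) ≤ ⊤))) v w
  have hdf : ∀ v : ℝ × ℝ, ∀ p : ℝ × ℝ,
      fderiv ℝ (fun q => fderiv ℝ (Function.uncurry f) q v) p
        = (fderiv ℝ (fderiv ℝ (Function.uncurry f)) p).flip v := by
    intro v p
    rw [fderiv_clm_apply ((h.fderiv_right (m := (⊤ : ℕ∞)) (by simp)).differentiable (by simp) p)
      (differentiable_const v p)]
    simp
  rw [ghost_pdt_eq _ (ghost_smooth_pdx f h), ghost_pdx_eq _ (ghost_smooth_pdt f h)]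
  have e1 : Function.uncurry (pdx f) = fun p : ℝ × ℝ =>
      fderiv ℝ (Function.uncurry f) p ((1:ℝ), (0:ℝ)) :=
    funext fun p => ghost_pdx_eq f h p.1 p.2
  have e2 : Function.uncurry (pdt f) = fun p : ℝ × ℝ =>
      fderiv ℝ (Function.uncurry f) p ((0:ℝ), (1:ℝ)) :=
    funext fun p => ghost_pdt_eq f h p.1 p.2
  rw [e1, e2, hdf, hdf]
  simp only [ContinuousLinearMap.flip_apply]
  exact hsymm _ _

theorem ghost_smooth_sliceX (f : ℝ → ℝ → ℝ) (h : Smooth2 f) (t : ℝ) :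
    ContDiff ℝ ∞ (fun y => f y t) := by
  have e : (fun y => f y t) = Function.uncurry f ∘ (fun y : ℝ => (y, t)) := rfl
  rw [e]
  exact (h.of_le (by simp)).comp (ContDiff.prodMk contDiff_id contDiff_const)

theorem ghost_smooth_sliceT (f : ℝ → ℝ → ℝ) (h : Smooth2 f) (x : ℝ) :
    ContDiff ℝ ∞ (fun s => f x s) := by
  have e : (fun s => f x s) = Function.uncurry f ∘ (fun s : ℝ => (x, s)) := rfl
  rw [e]
  exact (h.of_le (by simp)).comp (ContDiff.prodMk contDiff_const contDiff_id)

theorem ghost_hasDerivAt_iteratedDeriv_t (f : ℝ → ℝ → ℝ) (h : Smooth2 f) (n : ℕ) (x t : ℝ) :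
    HasDerivAt (fun τ => iteratedDeriv n (fun y => f y τ) x)
      (iteratedDeriv n (fun y => pdt f y t) x) t := by
  induction n generalizing f with
  | zero =>
    simp only [iteratedDeriv_zero]
    exact (((ghost_smooth_sliceT f h x).differentiable
      (by simp)).differentiableAt (x := t)).hasDerivAt
  | succ n ih =>
    have e1 : (fun τ => iteratedDeriv (n+1) (fun y => f y τ) x)
        = fun τ => iteratedDeriv n (fun y => pdx f y τ) x := by
      funext τ; rw [iteratedDeriv_succ']; rfl
    rw [e1]
    have key := ih (pdx f) (ghost_smooth_pdx f h)
    have e2 : iteratedDeriv n (fun y => pdt (pdx f) y t) x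
        = iteratedDeriv (n+1) (fun y => pdt f y t) x := by
      rw [iteratedDeriv_succ']
      congr 1
      funext y
      exact ghost_pdt_pdx_comm f h y t
    rw [e2] at key
    exact key

theorem ghost_iteratedDeriv_sub {f g : ℝ → ℝ} (hf : ContDiff ℝ ∞ f) (hg : ContDiff ℝ ∞ g)
    (n : ℕ) (x : ℝ) :
    iteratedDeriv n (fun y => f y - g y) x = iteratedDeriv n f x - iteratedDeriv n g x := by
  induction n generalizing f g with
  | zero => simp
  | succ n ih =>
    rw [iteratedDeriv_succ', iteratedDeriv_succ', iteratedDeriv_succ']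
    have e : deriv (fun y => f y - g y) = fun y => deriv f y - deriv g y := by
      funext y
      exact deriv_fun_sub ((hf.differentiable (by simp)).differentiableAt)
        ((hg.differentiable (by simp)).differentiableAt)
    rw [e]
    exact ih (ghost_smooth_deriv hf) (ghost_smooth_deriv hg)

theorem ghost_leibniz_struct (P : ℕ → Prop) (φ ψ : ℝ → ℝ) (σ F : ℕ → ℝ → ℝ)
    (hφ : ContDiff ℝ ∞ φ) (hψ : ContDiff ℝ ∞ ψ)
    (hσ : ∀ j, P j → ContDiff ℝ ∞ (σ j)) (hF : ∀ j, P j → ContDiff ℝ ∞ (F j))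
    (hd : ∀ j, P j → ∀ y, deriv (σ j) y = ψ y * F j y) (i : ℕ) :
    ∃ c : ℕ → ℝ → ℝ, (∀ p, ContDiff ℝ ∞ (c p)) ∧ (∀ p, i ≤ p → c p = fun _ => 0) ∧
      ∀ j, P j → ∀ y, iteratedDeriv i (fun z => φ z * σ j z) y
        = σ j y * iteratedDeriv i φ y
          + ∑ p ∈ Finset.range i, c p y * iteratedDeriv p (F j) y := by
  induction i with
  | zero =>
    refine ⟨fun _ _ => 0, fun _ => contDiff_const, fun _ _ => rfl, fun j hj y => ?_⟩
    simp [mul_comm]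
  | succ i ih =>
    obtain ⟨c, hsm, hz, hid⟩ := ih
    refine ⟨fun p => if p = 0 then (fun y => deriv (c 0) y + ψ y * iteratedDeriv i φ y)
      else fun y => deriv (c p) y + c (p-1) y, ?_, ?_, ?_⟩
    · intro p
      by_cases hp : p = 0
      · simp only []
        rw [if_pos hp]
        exact (ghost_smooth_deriv (hsm 0)).add (hψ.mul (ghost_smooth_iteratedDeriv hφ i))
      · simp only []
        rw [if_neg hp]
        exact (ghost_smooth_deriv (hsm p)).add (hsm (p-1))
    · intro p hp
      have hp0 : p ≠ 0 := by omega
      simp only [if_neg hp0]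
      have h1 : c p = fun _ => 0 := hz p (by omega)
      have h2 : c (p-1) = fun _ => 0 := hz (p-1) (by omega)
      funext y
      rw [h1, h2]
      simp
    · intro j hj y
      have hfun : iteratedDeriv i (fun z => φ z * σ j z)
          = fun y => σ j y * iteratedDeriv i φ y
            + ∑ p ∈ Finset.range i, c p y * iteratedDeriv p (F j) y :=
        funext (hid j hj)
      rw [iteratedDeriv_succ, hfun]
      have hσd : HasDerivAt (σ j) (ψ y * F j y) y := by
        have := ((hσ j hj).differentiable (by simp)).differentiableAt (x := y) |>.hasDerivAt
        rwa [hd j hj y] at this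
      have hφd : ∀ n : ℕ, HasDerivAt (iteratedDeriv n φ) (iteratedDeriv (n+1) φ y) y := by
        intro n
        rw [iteratedDeriv_succ]
        exact ((ghost_smooth_iteratedDeriv hφ n).differentiable
          (by simp)).differentiableAt.hasDerivAt
      have hFd : ∀ n : ℕ, HasDerivAt (iteratedDeriv n (F j))
          (iteratedDeriv (n+1) (F j) y) y := by
        intro n
        rw [iteratedDeriv_succ]
        exact ((ghost_smooth_iteratedDeriv (hF j hj) n).differentiable
          (by simp)).differentiableAt.hasDerivAt
      have hcd : ∀ p : ℕ, HasDerivAt (c p) (deriv (c p) y) y :=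
        fun p => ((hsm p).differentiable (by simp)).differentiableAt.hasDerivAt
      have main : HasDerivAt (fun y => σ j y * iteratedDeriv i φ y
            + ∑ p ∈ Finset.range i, c p y * iteratedDeriv p (F j) y)
          ((ψ y * F j y) * iteratedDeriv i φ y + σ j y * iteratedDeriv (i+1) φ y
            + ∑ p ∈ Finset.range i, (deriv (c p) y * iteratedDeriv p (F j) y
              + c p y * iteratedDeriv (p+1) (F j) y)) y :=
        (hσd.mul (hφd i)).add (HasDerivAt.fun_sum (fun p _ => (hcd p).mul (hFd p)))
      rw [main.deriv]
      have hsplit : ∑ p ∈ Finset.range (i+1),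
          (if p = 0 then (fun y => deriv (c 0) y + ψ y * iteratedDeriv i φ y)
            else fun y => deriv (c p) y + c (p-1) y) y * iteratedDeriv p (F j) y
          = (deriv (c 0) y + ψ y * iteratedDeriv i φ y) * F j y
            + ∑ p ∈ Finset.range i,
              (deriv (c (p+1)) y + c p y) * iteratedDeriv (p+1) (F j) y := by
        rw [Finset.sum_range_succ']
        simp only [Nat.succ_ne_zero, if_false, if_true, Nat.add_sub_cancel, reduceIte,
          iteratedDeriv_zero]
        ring_nf
      rw [hsplit]
      have hderiv_c_sum : ∑ p ∈ Finset.range i, deriv (c p) y * iteratedDeriv p (F j) y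
          = deriv (c 0) y * F j y
            + ∑ p ∈ Finset.range i, deriv (c (p+1)) y * iteratedDeriv (p+1) (F j) y := by
        have h1 : ∑ p ∈ Finset.range (i+1), deriv (c p) y * iteratedDeriv p (F j) y
            = ∑ p ∈ Finset.range i, deriv (c p) y * iteratedDeriv p (F j) y := by
          rw [Finset.sum_range_succ]
          have e0 : c i = fun _ => 0 := hz i le_rfl
          rw [e0]
          simp
        rw [← h1, Finset.sum_range_succ']
        simp [add_comm]
      simp only [Finset.sum_add_distrib, add_mul]
      rw [hderiv_c_sum]
      ring

/-- Determinant, as a continuous multilinear map in the rows. -/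
noncomputable def ghostDetCM (m : ℕ) :
    ContinuousMultilinearMap ℝ (fun _ : Fin m => (Fin m → ℝ)) ℝ where
  toMultilinearMap := (Matrix.detRowAlternating :
    (Fin m → ℝ) [⋀^Fin m]→ₗ[ℝ] ℝ).toMultilinearMap
  cont := by
    have h : Continuous fun c : Matrix (Fin m) (Fin m) ℝ => c.det :=
      Continuous.matrix_det continuous_id
    exact h

lemma ghostDetCM_apply (m : ℕ) (c : Fin m → Fin m → ℝ) :
    ghostDetCM m c = (Matrix.of c).det := rfl

lemma ghostDetCM_zero_of_eq (m : ℕ) (c : Fin m → Fin m → ℝ) {j j' : Fin m}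
    (h : c j = c j') (hne : j ≠ j') : ghostDetCM m c = 0 :=
  Matrix.detRowAlternating.map_eq_zero_of_eq c h hne

lemma ghostDetCM_update (m : ℕ) (c : Fin m → Fin m → ℝ) (j : Fin m) (v : Fin m → ℝ) :
    ghostDetCM m (Function.update c j v)
      = (((Matrix.of c).transpose).updateCol j v).det := by
  rw [ghostDetCM_apply, ← Matrix.det_transpose]
  congr 1
  ext i j'
  simp only [Matrix.updateCol_apply, Function.update_apply, Matrix.transpose_apply,
    Matrix.of_apply]
  split <;> rfl

lemma ghost_cramer_sum (m : ℕ) (c : Fin m → Fin m → ℝ) (u : Fin m → ℝ) (P : Fin m) :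
    ∑ j : Fin m, (Matrix.of c).transpose P j * ghostDetCM m (Function.update c j u)
      = ((Matrix.of c).transpose).det * u P := by
  have h := congrFun (Matrix.mulVec_cramer ((Matrix.of c).transpose) u) P
  simp only [Matrix.mulVec, dotProduct, Matrix.cramer_apply, Pi.smul_apply,
    smul_eq_mul] at h
  simpa [ghostDetCM_update] using h

end GhostAux

/-- for `1 ≤ m ≤ k`, the `t̄`-derivative of the eigenfunction Wronskian
is `∂̄W_m = s₁·W_m − W[Φ₁,…,Φ_{m−1},Φ_{m+1}]`. -/
theorem ghost_flow_of_eigenfunction_wronskian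
    (k : ℕ) (Φ : ℕ → ℝ → ℝ → ℝ) (Ψ₁ : ℝ → ℝ → ℝ) (s : ℕ → ℝ → ℝ → ℝ)
    (hΦ : ∀ j, 1 ≤ j → j ≤ k + 1 → Smooth2 (Φ j))
    (hΨ₁ : Smooth2 Ψ₁)
    (hs : ∀ j, 1 ≤ j → j ≤ k → Smooth2 (s j))
    (hpot : ∀ j, 1 ≤ j → j ≤ k → ∀ x t, pdx (s j) x t = Ψ₁ x t * Φ j x t)
    (hflow : ∀ j, 1 ≤ j → j ≤ k → ∀ x t,
      pdt (Φ j) x t = Φ 1 x t * s j x t - Φ (j + 1) x t) :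
    ∀ m, 1 ≤ m → m ≤ k → ∀ x t,
      pdt (Wr Φ m) x t = s 1 x t * Wr Φ m x t - WrShift Φ m x t := by
  intro m hm1 hmk x t
  haveI : NeZero m := ⟨by omega⟩
  have hΦs : ∀ j, 1 ≤ j → j ≤ k+1 → ContDiff ℝ ∞ (fun y => Φ j y t) :=
    fun j h1 h2 => ghost_smooth_sliceX _ (hΦ j h1 h2) t
  set C : ℝ → Fin m → Fin m → ℝ :=
    fun τ j i => iteratedDeriv (i : ℕ) (fun y => Φ ((j : ℕ)+1) y τ) x with hCdef
  set c : Fin m → Fin m → ℝ := C t with hcdef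
  have hWr : ∀ τ, Wr Φ m x τ = ghostDetCM m (C τ) := by
    intro τ
    rw [ghostDetCM_apply, ← Matrix.det_transpose]
    rfl
  set v : Fin m → Fin m → ℝ :=
    fun j i => iteratedDeriv (i : ℕ) (fun y => pdt (Φ ((j : ℕ)+1)) y t) x with hvdef
  have hsmΦj : ∀ j : Fin m, Smooth2 (Φ ((j : ℕ)+1)) :=
    fun j => hΦ _ (by omega) (by have := j.isLt; omega)
  have hder : HasDerivAt C v t :=
    hasDerivAt_pi.2 fun j => hasDerivAt_pi.2 fun i =>
      ghost_hasDerivAt_iteratedDeriv_t _ (hsmΦj j) (i : ℕ) x t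
  have hdet : HasDerivAt (fun τ => ghostDetCM m (C τ))
      (((ghostDetCM m).linearDeriv c) v) t :=
    ((ghostDetCM m).hasFDerivAt c).comp_hasDerivAt t hder
  have hpdtWr : pdt (Wr Φ m) x t
      = ∑ j : Fin m, ghostDetCM m (Function.update c j (v j)) := by
    have e : (fun τ => Wr Φ m x τ) = fun τ => ghostDetCM m (C τ) := funext hWr
    show deriv (fun τ => Wr Φ m x τ) t = _
    rw [e, hdet.deriv, ContinuousMultilinearMap.linearDeriv_apply]
  have L : ∀ i : ℕ, ∃ cc : ℕ → ℝ → ℝ, (∀ p, ContDiff ℝ ∞ (cc p)) ∧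
      (∀ p, i ≤ p → cc p = fun _ => 0) ∧
      ∀ j, (1 ≤ j ∧ j ≤ k) → ∀ y,
        iteratedDeriv i (fun z => (fun y => Φ 1 y t) z * (fun y => s j y t) z) y
        = s j y t * iteratedDeriv i (fun y => Φ 1 y t) y
          + ∑ p ∈ Finset.range i, cc p y * iteratedDeriv p (fun y => Φ j y t) y := by
    intro i
    exact ghost_leibniz_struct (fun j => 1 ≤ j ∧ j ≤ k)
      (fun y => Φ 1 y t) (fun y => Ψ₁ y t)
      (fun j y => s j y t) (fun j y => Φ j y t)
      (hΦs 1 le_rfl (by omega)) (ghost_smooth_sliceX _ hΨ₁ t)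
      (fun j hj => ghost_smooth_sliceX _ (hs j hj.1 hj.2) t)
      (fun j hj => hΦs j hj.1 (by omega))
      (fun j hj y => hpot j hj.1 hj.2 y t) i
  choose cc hccsm hccz hccid using L
  set n : ℕ → ℕ → ℝ := fun i p => cc i p x with hndef
  have hnz : ∀ i p, i ≤ p → n i p = 0 := by
    intro i p hip
    have h0 := hccz i p hip
    simp [hndef, h0]
  set A : Fin m → Fin m → ℝ :=
    fun j i => iteratedDeriv (i : ℕ) (fun y => Φ 1 y t * s ((j : ℕ)+1) y t) x with hAdef
  set B : Fin m → Fin m → ℝ :=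
    fun j i => iteratedDeriv (i : ℕ) (fun y => Φ ((j : ℕ)+2) y t) x with hBdef
  have hrange : ∀ j : Fin m, 1 ≤ (j : ℕ)+1 ∧ (j : ℕ)+1 ≤ k :=
    fun j => ⟨by omega, by have := j.isLt; omega⟩
  have hvAB : ∀ j : Fin m, v j = A j - B j := by
    intro j
    funext i
    have e : (fun y => pdt (Φ ((j : ℕ)+1)) y t)
        = fun y => Φ 1 y t * s ((j : ℕ)+1) y t - Φ ((j : ℕ)+2) y t := by
      funext y
      exact hflow ((j : ℕ)+1) (hrange j).1 (hrange j).2 y t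
    have hprod : ContDiff ℝ ∞ (fun y => Φ 1 y t * s ((j : ℕ)+1) y t) :=
      (hΦs 1 le_rfl (by omega)).mul
        (ghost_smooth_sliceX _ (hs _ (hrange j).1 (hrange j).2) t)
    have hsl : ContDiff ℝ ∞ (fun y => Φ ((j : ℕ)+2) y t) :=
      hΦs _ (by omega) (by have := j.isLt; omega)
    show iteratedDeriv (i : ℕ) (fun y => pdt (Φ ((j : ℕ)+1)) y t) x = A j i - B j i
    rw [e, ghost_iteratedDeriv_sub hprod hsl]
  set u : Fin m → Fin m → ℝ := fun P i => n (i : ℕ) (P : ℕ) with hudef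
  have hc0 : ∀ i : Fin m, c (0 : Fin m) i = iteratedDeriv (i : ℕ) (fun y => Φ 1 y t) x := by
    intro i
    show iteratedDeriv (i : ℕ) (fun y => Φ (((0 : Fin m) : ℕ)+1) y t) x = _
    norm_num
  have hA : ∀ j : Fin m, A j
      = (s ((j : ℕ)+1) x t) • (c (0 : Fin m)) + ∑ P : Fin m, (c j P) • (u P) := by
    intro j
    funext i
    have hid : A j i = s ((j : ℕ)+1) x t * iteratedDeriv (i : ℕ) (fun y => Φ 1 y t) x
        + ∑ p ∈ Finset.range (i : ℕ), cc (i : ℕ) p x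
            * iteratedDeriv p (fun y => Φ ((j : ℕ)+1) y t) x :=
      hccid (i : ℕ) ((j : ℕ)+1) (hrange j) x
    have e1 : ∑ P : Fin m, (c j P) * n (i : ℕ) (P : ℕ)
        = ∑ p ∈ Finset.range m,
            (iteratedDeriv p (fun y => Φ ((j : ℕ)+1) y t) x) * n (i : ℕ) p :=
      Fin.sum_univ_eq_sum_range
        (fun p => (iteratedDeriv p (fun y => Φ ((j : ℕ)+1) y t) x) * n (i : ℕ) p) m
    have e2 : ∑ p ∈ Finset.range m,
          (iteratedDeriv p (fun y => Φ ((j : ℕ)+1) y t) x) * n (i : ℕ) p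
        = ∑ p ∈ Finset.range (i : ℕ),
            (iteratedDeriv p (fun y => Φ ((j : ℕ)+1) y t) x) * n (i : ℕ) p := by
      refine (Finset.sum_subset (Finset.range_subset_range.2 (le_of_lt i.isLt)) ?_).symm
      intro p hp hnp
      have hip : (i : ℕ) ≤ p := by
        simp only [Finset.mem_range] at hnp
        omega
      rw [hnz _ _ hip, mul_zero]
    show A j i = _
    rw [hid]
    simp only [Pi.add_apply, Pi.smul_apply, smul_eq_mul, Finset.sum_apply]
    rw [hc0 i]
    congr 1
    have e3 : ∑ P : Fin m, (c j P) * u P i = ∑ P : Fin m, (c j P) * n (i : ℕ) (P : ℕ) := by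
      refine Finset.sum_congr rfl fun P _ => ?_
      rfl
    rw [e3, e1, e2]
    exact Finset.sum_congr rfl fun p _ => mul_comm _ _
  -- determinant of each updated family
  have hupd : ∀ j : Fin m, ghostDetCM m (Function.update c j (v j))
      = (s ((j : ℕ)+1) x t) * ghostDetCM m (Function.update c j (c (0 : Fin m)))
        + ∑ P : Fin m, (c j P) * ghostDetCM m (Function.update c j (u P))
        - ghostDetCM m (Function.update c j (B j)) := by
    intro j
    rw [hvAB j, (ghostDetCM m).map_update_sub c j (A j) (B j)]
    rw [hA j, (ghostDetCM m).map_update_add c j _ _]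
    rw [(ghostDetCM m).map_update_smul c j _ _]
    have hs2 := MultilinearMap.map_update_sum (ghostDetCM m).toMultilinearMap Finset.univ j
      (fun P => (c j P) • (u P)) c
    simp only [ContinuousMultilinearMap.coe_coe] at hs2
    rw [hs2]
    rw [smul_eq_mul]
    congr 2
    refine Finset.sum_congr rfl fun P _ => ?_
    rw [(ghostDetCM m).map_update_smul c j _ _, smul_eq_mul]
  -- sum of the three pieces
  have hsum1 : ∑ j : Fin m,
      (s ((j : ℕ)+1) x t) * ghostDetCM m (Function.update c j (c (0 : Fin m)))
      = s 1 x t * ghostDetCM m c := by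
    rw [Finset.sum_eq_single (0 : Fin m)]
    · rw [Function.update_eq_self]
      norm_num
    · intro j _ hj
      have hz : ghostDetCM m (Function.update c j (c (0 : Fin m))) = 0 := by
        refine ghostDetCM_zero_of_eq m _ (j := j) (j' := (0 : Fin m)) ?_ hj
        rw [Function.update_self, Function.update_of_ne (Ne.symm hj)]
      rw [hz, mul_zero]
    · intro h
      exact absurd (Finset.mem_univ _) h
  have hsum2 : ∑ j : Fin m, ∑ P : Fin m,
      (c j P) * ghostDetCM m (Function.update c j (u P)) = 0 := by
    rw [Finset.sum_comm]
    refine Finset.sum_eq_zero fun P _ => ?_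
    have e : ∀ j : Fin m, (c j P) = (Matrix.of c).transpose P j := fun j => rfl
    have h := ghost_cramer_sum m c (u P) P
    calc ∑ j : Fin m, (c j P) * ghostDetCM m (Function.update c j (u P))
        = ∑ j : Fin m, (Matrix.of c).transpose P j
            * ghostDetCM m (Function.update c j (u P)) := rfl
      _ = ((Matrix.of c).transpose).det * u P P := h
      _ = 0 := by
          have hz : u P P = 0 := hnz _ _ le_rfl
          rw [hz, mul_zero]
  have hsum3 : ∑ j : Fin m, ghostDetCM m (Function.update c j (B j))
      = WrShift Φ m x t := by
    set jl : Fin m := ⟨m-1, by omega⟩ with hjl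
    rw [Finset.sum_eq_single jl]
    · -- the surviving term is the shifted Wronskian
      rw [ghostDetCM_apply, ← Matrix.det_transpose]
      show ((Matrix.of (Function.update c jl (B jl))).transpose).det = _
      rw [WrShift, wronskian]
      congr 1
      ext i j'
      have hjlv : (jl : ℕ) = m - 1 := rfl
      by_cases hj' : j' = jl
      · have hval : ((j' : ℕ)) + 1 = m := by rw [hj', hjlv]; omega
        simp only [Matrix.transpose_apply, Matrix.of_apply, hj', Function.update_self]
        have h2 : ((jl : ℕ)) + 2 = m + 1 := by rw [hjlv]; omega
        have hval2 : ((jl : ℕ)) + 1 = m := by rw [hjlv]; omega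
        show iteratedDeriv (i : ℕ) (fun y => Φ ((jl : ℕ)+2) y t) x = _
        rw [if_pos hval2, h2]
      · simp only [Matrix.transpose_apply, Matrix.of_apply,
          Function.update_of_ne hj']
        have hval : ¬ ((j' : ℕ) + 1 = m) := by
          intro hcon
          exact hj' (Fin.ext (by rw [hjlv]; omega))
        rw [if_neg hval]
    · intro j _ hj
      have hlt : (j : ℕ) + 1 < m := by
        have h1 := j.isLt
        have h2 : (j : ℕ) ≠ m - 1 := by
          intro hcon
          exact hj (Fin.ext (by show (j:ℕ) = m-1; omega))
        omega
      set j2 : Fin m := ⟨(j : ℕ)+1, hlt⟩ with hj2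
      have hBj : B j = c j2 := by
        funext i
        show iteratedDeriv (i : ℕ) (fun y => Φ ((j : ℕ)+2) y t) x
          = iteratedDeriv (i : ℕ) (fun y => Φ ((j2 : ℕ)+1) y t) x
        have : (j2 : ℕ) + 1 = (j : ℕ) + 2 := by simp [hj2]
        rw [this]
      have hne : j ≠ j2 := by
        intro hcon
        have := congrArg (Fin.val) hcon
        simp [hj2] at this
      refine ghostDetCM_zero_of_eq m _ (j := j) (j' := j2) ?_ hne
      rw [Function.update_self, Function.update_of_ne (Ne.symm hne), hBj]
    · intro h
      exact absurd (Finset.mem_univ _) h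
  -- put everything together
  rw [hpdtWr]
  have : ∑ j : Fin m, ghostDetCM m (Function.update c j (v j))
      = (∑ j : Fin m,
          (s ((j : ℕ)+1) x t) * ghostDetCM m (Function.update c j (c (0 : Fin m))))
        + (∑ j : Fin m, ∑ P : Fin m,
            (c j P) * ghostDetCM m (Function.update c j (u P)))
        - ∑ j : Fin m, ghostDetCM m (Function.update c j (B j)) := by
    rw [← Finset.sum_add_distrib, ← Finset.sum_sub_distrib]
    exact Finset.sum_congr rfl fun j _ => hupd j
  rw [this, hsum1, hsum2, hsum3, add_zero, hWr t]
end
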